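/- arXiv:1607.04009 — 6 statements merged into one kernel-verified Lean document; each statement's English description precedes it below -/
import Mathlib

section
/- Along the minimizing movement scheme in a metric space, the approximate 1/2-Hölder estimate in time holds: for all integers 0 ≤ n₁ ≤ n₂, one has d(x_{n₁}, x_{n₂}) ≤ √(2 E(x_0)) · √(τ (n₂ − n₁)). -/
/-- Approximate 1/2-Hölder estimate in time for the minimizing movement (JKO)
scheme in a metric space. -/
theorem stmt_2 {X : Type*} [MetricSpace X] (E : X → ℝ) (hE : ∀ x, 0 ≤ E x)
    (τ : ℝ) (hτ : 0 < τ) (x : ℕ → X)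
    (hmin : ∀ n : ℕ, 1 ≤ n → ∀ y : X,
      dist (x n) (x (n - 1)) ^ 2 / (2 * τ) + E (x n)
        ≤ dist y (x (n - 1)) ^ 2 / (2 * τ) + E y) :
    ∀ n₁ n₂ : ℕ, n₁ ≤ n₂ →
      dist (x n₁) (x n₂)
        ≤ Real.sqrt (2 * E (x 0)) * Real.sqrt (τ * ((n₂ : ℝ) - (n₁ : ℝ))) := by
  have hstep : ∀ n : ℕ, dist (x (n + 1)) (x n) ^ 2 ≤ 2 * τ * (E (x n) - E (x (n + 1))) := by
    intro n
    have h := hmin (n + 1) (by omega) (x n)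
    simp only [Nat.add_sub_cancel, dist_self] at h
    norm_num at h
    have h2τ : 0 < 2 * τ := by linarith
    have h' : dist (x (n + 1)) (x n) ^ 2 / (2 * τ) ≤ E (x n) - E (x (n + 1)) := by linarith
    have := (div_le_iff₀ h2τ).mp h'
    linarith
  have hmono : ∀ m n : ℕ, m ≤ n → E (x n) ≤ E (x m) := by
    intro m n h
    induction n with
    | zero => simp_all
    | succ k ih =>
      rcases Nat.lt_or_ge m (k + 1) with hk | hk
      · have := ih (by omega)
        nlinarith [hstep k, sq_nonneg (dist (x (k + 1)) (x k))]
      · have : m = k + 1 := by omega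
        simp [this]
  intro n₁ n₂ h
  have hd := dist_le_Ico_sum_dist x h
  have hsum2 : ∀ N : ℕ, n₁ ≤ N →
      ∑ k ∈ Finset.Ico n₁ N, dist (x k) (x (k + 1)) ^ 2 ≤ 2 * τ * (E (x n₁) - E (x N)) := by
    intro N hN
    induction N with
    | zero =>
      interval_cases n₁
      simp
    | succ k ih =>
      rcases Nat.lt_or_ge k n₁ with hk | hk
      · have : n₁ = k + 1 := by omega
        simp [this]
      · rw [Finset.sum_Ico_succ_top hk]
        have := ih hk
        have h1 := hstep k
        rw [dist_comm (x (k + 1))] at h1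
        linarith
  have hS2 := hsum2 n₂ h
  set S := ∑ k ∈ Finset.Ico n₁ n₂, dist (x k) (x (k + 1)) with hSdef
  have hCS : S ^ 2 ≤ (n₂ - n₁ : ℕ) * ∑ k ∈ Finset.Ico n₁ n₂, dist (x k) (x (k + 1)) ^ 2 := by
    have := sq_sum_le_card_mul_sum_sq (s := Finset.Ico n₁ n₂)
      (f := fun k => dist (x k) (x (k + 1)))
    simpa [Nat.card_Ico] using this
  have hEbound : 2 * τ * (E (x n₁) - E (x n₂)) ≤ 2 * τ * E (x 0) := by
    have h1 := hmono 0 n₁ (Nat.zero_le _)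
    have h2 := hE (x n₂)
    nlinarith
  have hS2' : S ^ 2 ≤ (n₂ - n₁ : ℕ) * (2 * τ * E (x 0)) := by
    calc S ^ 2 ≤ (n₂ - n₁ : ℕ) * ∑ k ∈ Finset.Ico n₁ n₂, dist (x k) (x (k + 1)) ^ 2 := hCS
      _ ≤ (n₂ - n₁ : ℕ) * (2 * τ * E (x 0)) := by
          apply mul_le_mul_of_nonneg_left (le_trans hS2 hEbound) (by positivity)
  have hSnn : 0 ≤ S := Finset.sum_nonneg fun _ _ => dist_nonneg
  have hcast : ((n₂ - n₁ : ℕ) : ℝ) = (n₂ : ℝ) - (n₁ : ℝ) := by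
    push_cast [Nat.cast_sub h]; ring
  calc dist (x n₁) (x n₂) ≤ S := hd
    _ = Real.sqrt (S ^ 2) := by rw [Real.sqrt_sq hSnn]
    _ ≤ Real.sqrt ((n₂ - n₁ : ℕ) * (2 * τ * E (x 0))) := Real.sqrt_le_sqrt hS2'
    _ = Real.sqrt (2 * E (x 0)) * Real.sqrt (τ * ((n₂ : ℝ) - (n₁ : ℝ))) := by
        rw [← Real.sqrt_mul (mul_nonneg (by norm_num) (hE _))]
        congr 1
        rw [hcast]; ring
end

section
/- Characterization of the subdifferential of the energy: for every s ∈ 𝒳 ∩ 𝒜 and every h ∈ L^∞(Ω; ℝ^{N+1}), h belongs to the subdifferential ∂E(s) — meaning E(ŝ) ≥ E(s) + Σ_{i=0}^N ∫_Ω h_i (ŝ_i − s_i) dx for every ŝ ∈ L¹(Ω; ℝ^{N+1}), the inequality being trivially satisfied when E(ŝ) = +∞ — if and only if for a.e. x ∈ Ω the vector h(x) − Ψ(x) belongs to the subdifferential at s(x) of the extended convex function Π(·, x) : ℝ^{N+1} → [0, +∞]. -/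
/-!
The energy is the integral functional `E(u) = ∫_Ω f(u(x), x) dx` of the integrand
`f(v, x) = Π(v, x) + v·Ψ(x)`, and `h − Ψ` is a subgradient of `Π(·, x)` at `s(x)` exactly when
`h` is one of `f(·, x)`. Integrating the pointwise subgradient inequality gives `h ∈ ∂E(s)`.
Conversely, testing `h ∈ ∂E(s)` against `ŝ = q` on a set `B` and `ŝ = s` off `B` shows that the
pointwise inequality at a fixed vector `q` holds for a.e. `x` with `q ∈ dom f(·, x)`. Since there
are countably many rational `q`, a.e. `x` satisfies it at all rational `q` at once; it extends to
the whole domain because every `w ∈ Δ*(x)` is the limit of the rational points `⌊n w⌋ / n ≤ w`,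
which stay in the down-closed set `Δ*(x)`, and `Π(·, x)` is continuous along them.
-/

open MeasureTheory
open scoped ENNReal Classical

/-- The extended capillary energy density `Π : ℝ^{N+1} × Ω → [0,+∞]`: it equals
`Π(ω(x) s*/σ, x)` when `s ≥ 0` and `σ = Σ_i s_i ≤ ω(x)` (with `s* = (s_1,…,s_N)`,
and the value `Π(0,x)` when `σ = 0`), and `+∞` otherwise. -/
noncomputable def PiExt {d N : ℕ} (ω : (Fin d → ℝ) → ℝ)
    (Pc : (Fin N → ℝ) → (Fin d → ℝ) → ℝ)
    (s : Fin (N + 1) → ℝ) (x : Fin d → ℝ) : ℝ≥0∞ :=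
  if (∀ i, 0 ≤ s i) ∧ ∑ i, s i ≤ ω x then
    (if ∑ i, s i = 0 then ENNReal.ofReal (Pc 0 x)
     else ENNReal.ofReal (Pc (fun j => ω x * s j.succ / ∑ i, s i) x))
  else ⊤

/-- The energy of a configuration: capillary energy plus potential energy,
`E(s) = ∫_Ω (Π(s(x),x) + Σ_i s_i(x) Ψ_i(x)) dx ∈ [0,+∞]`. -/
noncomputable def Energy {d N : ℕ} (Ω : Set (Fin d → ℝ)) (ω : (Fin d → ℝ) → ℝ)
    (Pc : (Fin N → ℝ) → (Fin d → ℝ) → ℝ) (Ψ : Fin (N + 1) → (Fin d → ℝ) → ℝ)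
    (s : Fin (N + 1) → (Fin d → ℝ) → ℝ) : ℝ≥0∞ :=
  ∫⁻ x in Ω, (PiExt ω Pc (fun i => s i x) x + ENNReal.ofReal (∑ i, s i x * Ψ i x))

open Filter Topology

theorem ContinuousOn.comp_aemeasurable {α β γ : Type*} [MeasurableSpace α]
    [TopologicalSpace β] [MeasurableSpace β] [OpensMeasurableSpace β]
    [TopologicalSpace γ] [MeasurableSpace γ] [BorelSpace γ] {μ : Measure α}
    {g : β → γ} {S : Set β} {u : α → β} (hg : ContinuousOn g S) (hS : MeasurableSet S)
    (hu : AEMeasurable u μ) (hmem : ∀ᵐ x ∂μ, u x ∈ S) :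
    AEMeasurable (fun x => g (u x)) μ := by
  have hg' : AEMeasurable g ((μ.map u).restrict S) := hg.aemeasurable hS
  rw [Measure.restrict_eq_self_of_ae_mem ((mem_ae_map_iff hu hS).2 hmem)] at hg'
  exact hg'.comp_aemeasurable hu

theorem ContinuousOn.memLp_top {α : Type*} [TopologicalSpace α] [T2Space α] [MeasurableSpace α]
    [OpensMeasurableSpace α] {μ : Measure α} {K : Set α} {f : α → ℝ}
    (hf : ContinuousOn f K) (hK : IsCompact K) (hμK : ∀ᵐ x ∂μ, x ∈ K) : MemLp f ∞ μ := by
  obtain ⟨C, hC⟩ := hK.exists_bound_of_continuousOn hf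
  refine memLp_top_of_bound ?_ C (hμK.mono hC)
  rw [← Measure.restrict_eq_self_of_ae_mem hμK]
  exact (hf.aemeasurable hK.measurableSet).aestronglyMeasurable

section Subgradient

variable {ι : Type*}

def IsSubgradient [Fintype ι] (φ : (ι → ℝ) → ℝ≥0∞) (v p : ι → ℝ) : Prop :=
  φ v ≠ ⊤ ∧ ∀ w, φ w ≠ ⊤ → (φ v).toReal + ∑ i, p i * (w i - v i) ≤ (φ w).toReal

def RatApproximable (φ : (ι → ℝ) → ℝ≥0∞) : Prop :=
  ∀ w, φ w ≠ ⊤ → ∃ r : ℕ → ι → ℚ, (∀ n, φ (fun i => r n i) ≠ ⊤) ∧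
    Tendsto (fun n i => (r n i : ℝ)) atTop (𝓝 w) ∧
    Tendsto (fun n => (φ fun i => r n i).toReal) atTop (𝓝 (φ w).toReal)

theorem RatApproximable.isSubgradient_of_forall_rat [Fintype ι] {φ : (ι → ℝ) → ℝ≥0∞}
    {v p : ι → ℝ} (hφ : RatApproximable φ) (hv : φ v ≠ ⊤)
    (hrat : ∀ r : ι → ℚ, φ (fun i => r i) ≠ ⊤ →
      (φ v).toReal + ∑ i, p i * (r i - v i) ≤ (φ fun i => r i).toReal) :
    IsSubgradient φ v p := by
  refine ⟨hv, fun w hw => ?_⟩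
  obtain ⟨r, hr, hrw, hφr⟩ := hφ w hw
  refine le_of_tendsto_of_tendsto' ?_ hφr fun n => hrat (r n) (hr n)
  exact tendsto_const_nhds.add <| tendsto_finsetSum _ fun i _ =>
    tendsto_const_nhds.mul ((tendsto_pi_nhds.1 hrw i).sub tendsto_const_nhds)

theorem RatApproximable.add_ofReal {φ : (ι → ℝ) → ℝ≥0∞} {g : (ι → ℝ) → ℝ}
    (hφ : RatApproximable φ) (hg : Continuous g) :
    RatApproximable fun w => φ w + ENNReal.ofReal (g w) := by
  intro w hw
  obtain ⟨r, hr, hrw, hφr⟩ := hφ w (ENNReal.add_ne_top.1 hw).1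
  refine ⟨r, fun n => ENNReal.add_ne_top.2 ⟨hr n, ENNReal.ofReal_ne_top⟩, hrw, ?_⟩
  simp only [ENNReal.toReal_add (hr _) ENNReal.ofReal_ne_top,
    ENNReal.toReal_add (ENNReal.add_ne_top.1 hw).1 ENNReal.ofReal_ne_top,
    ENNReal.toReal_ofReal']
  exact hφr.add (((hg.tendsto w).comp hrw).max tendsto_const_nhds)

theorem isSubgradient_add_ofReal_linear_iff [Fintype ι] {φ : (ι → ℝ) → ℝ≥0∞} {c v p : ι → ℝ}
    (hc : ∀ w, φ w ≠ ⊤ → 0 ≤ ∑ i, w i * c i) :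
    IsSubgradient (fun w => φ w + ENNReal.ofReal (∑ i, w i * c i)) v p ↔
      IsSubgradient φ v (fun i => p i - c i) := by
  have htop : ∀ w, φ w + ENNReal.ofReal (∑ i, w i * c i) ≠ ⊤ ↔ φ w ≠ ⊤ := fun w => by
    simp
  have hreal : ∀ w, φ w ≠ ⊤ → (φ w + ENNReal.ofReal (∑ i, w i * c i)).toReal
      = (φ w).toReal + ∑ i, w i * c i := fun w hw => by
    rw [ENNReal.toReal_add hw ENNReal.ofReal_ne_top, ENNReal.toReal_ofReal (hc w hw)]
  have hlin : ∀ w : ι → ℝ, ∑ i, (p i - c i) * (w i - v i)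
      = ∑ i, p i * (w i - v i) - (∑ i, w i * c i - ∑ i, v i * c i) := fun w => by
    simp only [← Finset.sum_sub_distrib]
    exact Finset.sum_congr rfl fun i _ => by ring
  simp only [IsSubgradient, htop]
  refine and_congr_right fun hv => forall_congr' fun w => imp_congr_right fun hw => ?_
  rw [hreal v hv, hreal w hw, hlin]
  constructor <;> intro h <;> linarith

end Subgradient

section IntegralFunctional

variable {X : Type*} [MeasurableSpace X] {μ : Measure X}

theorem lintegral_eq_ofReal_integral_toReal {g : X → ℝ≥0∞}
    (hg : Integrable (fun x => (g x).toReal) μ) (hfin : ∀ᵐ x ∂μ, g x ≠ ⊤) :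
    ∫⁻ x, g x ∂μ = ENNReal.ofReal (∫ x, (g x).toReal ∂μ) := by
  rw [ofReal_integral_eq_lintegral_ofReal hg (ae_of_all _ fun _ => ENNReal.toReal_nonneg)]
  exact lintegral_congr_ae (hfin.mono fun x hx => (ENNReal.ofReal_toReal hx).symm)

theorem toReal_lintegral_eq_integral_toReal {g : X → ℝ≥0∞}
    (hg : Integrable (fun x => (g x).toReal) μ) (hfin : ∀ᵐ x ∂μ, g x ≠ ⊤) :
    (∫⁻ x, g x ∂μ).toReal = ∫ x, (g x).toReal ∂μ := by
  rw [lintegral_eq_ofReal_integral_toReal hg hfin,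
    ENNReal.toReal_ofReal (integral_nonneg fun _ => ENNReal.toReal_nonneg)]

theorem integral_le_toReal_lintegral {W : X → ℝ} {g : X → ℝ≥0∞} (hW : Integrable W μ)
    (hg : ∫⁻ x, g x ∂μ ≠ ⊤) (hle : ∀ᵐ x ∂μ, ENNReal.ofReal (W x) ≤ g x) :
    ∫ x, W x ∂μ ≤ (∫⁻ x, g x ∂μ).toReal := by
  rw [integral_eq_lintegral_pos_part_sub_lintegral_neg_part hW]
  calc _ ≤ (∫⁻ x, ENNReal.ofReal (W x) ∂μ).toReal := sub_le_self _ ENNReal.toReal_nonneg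
    _ ≤ _ := ENNReal.toReal_mono hg (lintegral_mono_ae hle)

variable {ι : Type*} [Fintype ι]

def IsIntegralSubgradient (f : (ι → ℝ) → X → ℝ≥0∞) (μ : Measure X) (s h : ι → X → ℝ) :
    Prop :=
  ∀ sh : ι → X → ℝ, (∀ i, Integrable (sh i) μ) → ∫⁻ x, f (fun i => sh i x) x ∂μ ≠ ⊤ →
    (∫⁻ x, f (fun i => s i x) x ∂μ).toReal + ∑ i, ∫ x, h i x * (sh i x - s i x) ∂μ
      ≤ (∫⁻ x, f (fun i => sh i x) x ∂μ).toReal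

theorem isIntegralSubgradient_of_ae_isSubgradient
    {f : (ι → ℝ) → X → ℝ≥0∞} {s h : ι → X → ℝ}
    (hs : ∀ i, Integrable (s i) μ) (hh : ∀ i, MemLp (h i) ∞ μ)
    (hfs : Integrable (fun x => (f (fun i => s i x) x).toReal) μ)
    (hsub : ∀ᵐ x ∂μ, IsSubgradient (f · x) (fun i => s i x) (fun i => h i x)) :
    IsIntegralSubgradient f μ s h := by
  intro sh hsh hfin
  have hint : ∀ i, Integrable (fun x => h i x * (sh i x - s i x)) μ := fun i =>
    ((hsh i).sub (hs i)).mul_of_top_right (hh i)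
  have hsum := integrable_finsetSum Finset.univ fun i _ => hint i
  rw [toReal_lintegral_eq_integral_toReal hfs (hsub.mono fun _ hx => hx.1),
    ← integral_finsetSum _ fun i _ => hint i, ← integral_add hfs hsum]
  refine integral_le_toReal_lintegral (hfs.add hsum) hfin ?_
  filter_upwards [hsub] with x hx
  by_cases htop : f (fun i => sh i x) x = ⊤
  · simp [htop]
  · rw [← ENNReal.ofReal_toReal htop]
    exact ENNReal.ofReal_le_ofReal (hx.2 _ htop)

theorem IsIntegralSubgradient.setIntegral_le [IsFiniteMeasure μ]
    {f : (ι → ℝ) → X → ℝ≥0∞} {s h : ι → X → ℝ} (H : IsIntegralSubgradient f μ s h)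
    (hs : ∀ i, Integrable (s i) μ)
    (hfs : Integrable (fun x => (f (fun i => s i x) x).toReal) μ)
    (hfs_fin : ∀ᵐ x ∂μ, f (fun i => s i x) x ≠ ⊤)
    (q : ι → ℝ) {B : Set X} (hB : MeasurableSet B) (hfq_fin : ∀ᵐ x ∂μ, x ∈ B → f q x ≠ ⊤)
    (hfq : IntegrableOn (fun x => (f q x).toReal) B μ) :
    ∫ x in B, (f (fun i => s i x) x).toReal ∂μ + ∑ i, ∫ x in B, h i x * (q i - s i x) ∂μ
      ≤ ∫ x in B, (f q x).toReal ∂μ := by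
  set sh : ι → X → ℝ := fun i => B.piecewise (fun _ => q i) (s i)
  have hf_sh : (fun x => (f (fun i => sh i x) x).toReal)
      = B.piecewise (fun x => (f q x).toReal) (fun x => (f (fun i => s i x) x).toReal) := by
    funext x
    by_cases hx : x ∈ B <;> simp [sh, hx]
  have hint : Integrable (fun x => (f (fun i => sh i x) x).toReal) μ := by
    rw [hf_sh]
    exact Integrable.piecewise hB hfq hfs.integrableOn
  have hfin : ∀ᵐ x ∂μ, f (fun i => sh i x) x ≠ ⊤ := by
    filter_upwards [hfs_fin, hfq_fin] with x h1 h2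
    by_cases hx : x ∈ B <;> simp [sh, hx, h1, h2]
  have hdiff : ∀ i, ∫ x, h i x * (sh i x - s i x) ∂μ = ∫ x in B, h i x * (q i - s i x) ∂μ :=
    fun i => by
      rw [← integral_indicator hB]
      congr 1 with x
      by_cases hx : x ∈ B <;> simp [sh, hx]
  have hsh : ∀ i, Integrable (sh i) μ := fun i =>
    Integrable.piecewise hB (integrable_const (q i)).integrableOn (hs i).integrableOn
  have hsub := H sh hsh <| by
    rw [lintegral_eq_ofReal_integral_toReal hint hfin]
    exact ENNReal.ofReal_ne_top
  rw [toReal_lintegral_eq_integral_toReal hfs hfs_fin,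
    toReal_lintegral_eq_integral_toReal hint hfin, hf_sh,
    integral_piecewise hB hfq hfs.integrableOn, ← integral_add_compl hB hfs] at hsub
  simp only [hdiff] at hsub
  linarith

theorem IsIntegralSubgradient.ae_le [IsFiniteMeasure μ]
    {f : (ι → ℝ) → X → ℝ≥0∞} {s h : ι → X → ℝ} (H : IsIntegralSubgradient f μ s h)
    (hs : ∀ i, Integrable (s i) μ) (hh : ∀ i, MemLp (h i) ∞ μ)
    (hfs : Integrable (fun x => (f (fun i => s i x) x).toReal) μ)
    (hfs_fin : ∀ᵐ x ∂μ, f (fun i => s i x) x ≠ ⊤)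
    (q : ι → ℝ) {D : Set X} (hD : MeasurableSet D) (hfq_fin : ∀ᵐ x ∂μ, x ∈ D → f q x ≠ ⊤)
    (hfq : IntegrableOn (fun x => (f q x).toReal) D μ) :
    ∀ᵐ x ∂μ, x ∈ D →
      (f (fun i => s i x) x).toReal + ∑ i, h i x * (q i - s i x) ≤ (f q x).toReal := by
  have hint : ∀ i, Integrable (fun x => h i x * (q i - s i x)) μ := fun i =>
    ((integrable_const (q i)).sub (hs i)).mul_of_top_right (hh i)
  set G : X → ℝ := fun x =>
    (f q x).toReal - (f (fun i => s i x) x).toReal - ∑ i, h i x * (q i - s i x)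
  have hG : Integrable G (μ.restrict D) :=
    (hfq.sub hfs.integrableOn).sub (integrable_finsetSum _ fun i _ => (hint i).integrableOn)
  have hG0 : 0 ≤ᵐ[μ.restrict D] G := by
    refine ae_nonneg_of_forall_setIntegral_nonneg hG fun t ht _ => ?_
    have hfqB : IntegrableOn (fun x => (f q x).toReal) (t ∩ D) μ :=
      hfq.mono_set Set.inter_subset_right
    have gap := H.setIntegral_le hs hfs hfs_fin q (ht.inter hD)
      (hfq_fin.mono fun x hx hxB => hx hxB.2) hfqB
    rw [Measure.restrict_restrict ht, integral_sub (by exact hfqB.sub hfs.integrableOn)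
      (integrable_finsetSum _ fun i _ => (hint i).integrableOn),
      integral_sub hfqB hfs.integrableOn, integral_finsetSum _ fun i _ => (hint i).integrableOn]
    linarith
  rw [← ae_restrict_iff' hD]
  filter_upwards [hG0] with x hx
  simp only [G, Pi.zero_apply] at hx
  linarith

theorem isIntegralSubgradient_iff_ae_isSubgradient [IsFiniteMeasure μ]
    {f : (ι → ℝ) → X → ℝ≥0∞} {s h : ι → X → ℝ}
    (hs : ∀ i, Integrable (s i) μ) (hh : ∀ i, MemLp (h i) ∞ μ)
    (hfs : Integrable (fun x => (f (fun i => s i x) x).toReal) μ)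
    (hfs_fin : ∀ᵐ x ∂μ, f (fun i => s i x) x ≠ ⊤)
    (hdom : ∀ q : ι → ℝ, ∃ D, MeasurableSet D ∧ (∀ᵐ x ∂μ, x ∈ D ↔ f q x ≠ ⊤) ∧
      IntegrableOn (fun x => (f q x).toReal) D μ)
    (happrox : ∀ᵐ x ∂μ, RatApproximable (f · x)) :
    IsIntegralSubgradient f μ s h ↔
      ∀ᵐ x ∂μ, IsSubgradient (f · x) (fun i => s i x) (fun i => h i x) := by
  refine ⟨fun H => ?_, isIntegralSubgradient_of_ae_isSubgradient hs hh hfs⟩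
  have hrat : ∀ᵐ x ∂μ, ∀ r : ι → ℚ, f (fun i => r i) x ≠ ⊤ →
      (f (fun i => s i x) x).toReal + ∑ i, h i x * (r i - s i x)
        ≤ (f (fun i => r i) x).toReal := by
    refine ae_all_iff.2 fun r => ?_
    obtain ⟨D, hD, hDf, hfr⟩ := hdom fun i => r i
    filter_upwards [H.ae_le hs hh hfs hfs_fin _ hD (hDf.mono fun x hx => hx.1) hfr, hDf]
      with x hx hxD hfin
    exact hx (hxD.2 hfin)
  filter_upwards [happrox, hfs_fin, hrat] with x hx hfin hr
  exact hx.isSubgradient_of_forall_rat hfin hr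

end IntegralFunctional

section SubSimplex

variable {κ : Type*} [Fintype κ]

-- `Δ*(x)` is `subSimplex (ω x)`.
def subSimplex (c : ℝ) : Set (κ → ℝ) := {t | (∀ j, 0 ≤ t j) ∧ ∑ j, t j ≤ c}

theorem mem_subSimplex_of_le {c : ℝ} {t u : κ → ℝ} (ht : t ∈ subSimplex c)
    (hu : ∀ j, 0 ≤ u j) (hle : ∀ j, u j ≤ t j) : u ∈ subSimplex c :=
  ⟨hu, (Finset.sum_le_sum fun j _ => hle j).trans ht.2⟩

theorem isClosed_setOf_mem_subSimplex {E : Type*} [TopologicalSpace E] {K : Set E}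
    {ω : E → ℝ} (hK : IsClosed K) (hω : ContinuousOn ω K) :
    IsClosed {p : (κ → ℝ) × E | p.2 ∈ K ∧ p.1 ∈ subSimplex (ω p.2)} := by
  have hclosed : IsClosed {q : (κ → ℝ) × ℝ | q.1 ∈ subSimplex q.2} := by
    have hset : {q : (κ → ℝ) × ℝ | q.1 ∈ subSimplex q.2}
        = (⋂ j, {q | 0 ≤ q.1 j}) ∩ {q | ∑ j, q.1 j ≤ q.2} := by
      ext q; simp [subSimplex]
    rw [hset]
    exact (isClosed_iInter fun j => isClosed_le (by fun_prop) (by fun_prop)).inter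
      (isClosed_le (by fun_prop) (by fun_prop))
  exact ContinuousOn.preimage_isClosed_of_isClosed (f := fun p => (p.1, ω p.2))
    (continuousOn_fst.prodMk (hω.comp continuousOn_snd fun _ hp => hp))
    (hK.preimage continuous_snd) hclosed

end SubSimplex

section CapillaryEnergy

variable {d N : ℕ} {ω : (Fin d → ℝ) → ℝ} {Pc : (Fin N → ℝ) → (Fin d → ℝ) → ℝ}
  {Ψ : Fin (N + 1) → (Fin d → ℝ) → ℝ} {v : Fin (N + 1) → ℝ} {x : Fin d → ℝ}

-- The point `ω(x) s*/σ` at which `PiExt` evaluates `Pc`; for `σ = 0` division by zero makes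
-- it `0`, which matches the `Π(0, x)` branch.
noncomputable def rescaledTail (c : ℝ) (v : Fin (N + 1) → ℝ) : Fin N → ℝ :=
  fun j => c * v j.succ / ∑ i, v i

theorem rescaledTail_mem {c : ℝ} (hv : v ∈ subSimplex c) :
    rescaledTail c v ∈ subSimplex c := by
  have hσ : 0 ≤ ∑ i, v i := Finset.sum_nonneg fun i _ => hv.1 i
  have hc : 0 ≤ c := hσ.trans hv.2
  refine ⟨fun j => div_nonneg (mul_nonneg hc (hv.1 _)) hσ, ?_⟩
  have htail : ∑ j : Fin N, v j.succ ≤ ∑ i, v i := by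
    rw [Fin.sum_univ_succ]; linarith [hv.1 0]
  simp only [rescaledTail, ← Finset.sum_div, ← Finset.mul_sum]
  exact div_le_of_le_mul₀ hσ hc (mul_le_mul_of_nonneg_left htail hc)

theorem continuousAt_rescaledTail {c : ℝ} (hv : ∑ i, v i ≠ 0) :
    ContinuousAt (rescaledTail c) v := by
  unfold rescaledTail
  fun_prop (disch := exact hv)

theorem piExt_ne_top_iff : PiExt ω Pc v x ≠ ⊤ ↔ v ∈ subSimplex (ω x) := by
  unfold PiExt
  split_ifs with h <;> simp_all [subSimplex]

theorem piExt_of_mem (hv : v ∈ subSimplex (ω x)) :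
    PiExt ω Pc v x = ENNReal.ofReal (Pc (rescaledTail (ω x) v) x) := by
  unfold PiExt
  rw [if_pos (show (∀ i, 0 ≤ v i) ∧ ∑ i, v i ≤ ω x from hv)]
  split_ifs with hσ
  · congr
    funext j
    simp [rescaledTail, hσ]
  · rfl

theorem toReal_piExt_of_mem (hv : v ∈ subSimplex (ω x)) :
    (PiExt ω Pc v x).toReal = max (Pc (rescaledTail (ω x) v) x) 0 := by
  rw [piExt_of_mem hv, ENNReal.toReal_ofReal']

theorem ratApproximable_piExt
    (hPc : ContinuousOn (fun t => Pc t x) (subSimplex (ω x))) :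
    RatApproximable (fun v => PiExt ω Pc v x) := by
  intro w hw
  rw [piExt_ne_top_iff] at hw
  set r : ℕ → Fin (N + 1) → ℚ := fun n i => ⌊w i * n⌋₊ / n
  have hr : ∀ n i, (r n i : ℝ) = ⌊w i * n⌋₊ / n := fun n i => by push_cast [r]; rfl
  have hr0 : ∀ n i, 0 ≤ (r n i : ℝ) := fun n i => by rw [hr]; positivity
  have hrle : ∀ n i, (r n i : ℝ) ≤ w i := fun n i => by
    rw [hr]
    exact div_le_of_le_mul₀ n.cast_nonneg (hw.1 i)
      (Nat.floor_le (mul_nonneg (hw.1 i) n.cast_nonneg))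
  have hrmem : ∀ n, (fun i => (r n i : ℝ)) ∈ subSimplex (ω x) := fun n =>
    mem_subSimplex_of_le hw (hr0 n) (hrle n)
  have hrw : Tendsto (fun n i => (r n i : ℝ)) atTop (𝓝 w) := by
    refine tendsto_pi_nhds.2 fun i => ?_
    simp only [hr]
    exact (tendsto_nat_floor_mul_div_atTop (hw.1 i)).comp tendsto_natCast_atTop_atTop
  refine ⟨r, fun n => piExt_ne_top_iff.2 (hrmem n), hrw, ?_⟩
  simp only [toReal_piExt_of_mem (hrmem _), toReal_piExt_of_mem hw]
  refine Tendsto.max ?_ tendsto_const_nhds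
  by_cases hσ : ∑ i, w i = 0
  · -- `rescaledTail` is discontinuous at `0`, but there the approximants are `0` itself
    have hw0 : ∀ i, w i = 0 := fun i =>
      (Finset.sum_eq_zero_iff_of_nonneg fun i _ => hw.1 i).1 hσ i (Finset.mem_univ i)
    have hrw' : ∀ n, (fun i => (r n i : ℝ)) = w := fun n => funext fun i =>
      le_antisymm (hrle n i) (hw0 i ▸ hr0 n i)
    simp only [hrw']
    exact tendsto_const_nhds
  · have hτ : Tendsto (fun n => rescaledTail (ω x) fun i => (r n i : ℝ)) atTop
        (𝓝[subSimplex (ω x)] rescaledTail (ω x) w) :=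
      tendsto_nhdsWithin_iff.2 ⟨(continuousAt_rescaledTail hσ).tendsto.comp hrw,
        Eventually.of_forall fun n => rescaledTail_mem (hrmem n)⟩
    exact (hPc _ (rescaledTail_mem hw)).tendsto.comp hτ

theorem integrable_toReal_piExt {μ : Measure (Fin d → ℝ)} [IsFiniteMeasure μ]
    {K : Set (Fin d → ℝ)} (hK : IsClosed K) (hω : ContinuousOn ω K) (hμK : ∀ᵐ x ∂μ, x ∈ K)
    (hPcont : ContinuousOn (fun p : (Fin N → ℝ) × (Fin d → ℝ) => Pc p.1 p.2)
      {p | p.2 ∈ K ∧ p.1 ∈ subSimplex (ω p.2)})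
    {M : ℝ} (hPcM : ∀ x ∈ K, ∀ t ∈ subSimplex (ω x), Pc t x ≤ M)
    {u : (Fin d → ℝ) → Fin (N + 1) → ℝ} (hu : AEMeasurable u μ)
    (hdom : ∀ᵐ x ∂μ, u x ∈ subSimplex (ω x)) :
    Integrable (fun x => (PiExt ω Pc (u x) x).toReal) μ := by
  have hωm : AEMeasurable ω μ := by
    rw [← Measure.restrict_eq_self_of_ae_mem hμK]
    exact hω.aemeasurable hK.measurableSet
  have hτ : AEMeasurable (fun x => rescaledTail (ω x) (u x)) μ := by
    unfold rescaledTail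
    fun_prop
  have hPm : AEMeasurable (fun x => Pc (rescaledTail (ω x) (u x)) x) μ := by
    refine hPcont.comp_aemeasurable (isClosed_setOf_mem_subSimplex hK hω).measurableSet
      (hτ.prodMk aemeasurable_id) ?_
    filter_upwards [hμK, hdom] with x hx hux
    exact ⟨hx, rescaledTail_mem hux⟩
  refine Integrable.congr (f := fun x => max (Pc (rescaledTail (ω x) (u x)) x) 0) ?_ ?_
  · refine (integrable_const (max M 0)).mono' (hPm.max aemeasurable_const).aestronglyMeasurable ?_
    filter_upwards [hμK, hdom] with x hx hux
    rw [Real.norm_of_nonneg (le_max_right _ _)]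
    exact max_le_max_right 0 (hPcM x hx _ (rescaledTail_mem hux))
  · filter_upwards [hdom] with x hux
    exact (toReal_piExt_of_mem hux).symm

-- `Energy Ω ω Pc Ψ u` is definitionally `∫⁻ x in Ω, energyDensity ω Pc Ψ (fun i => u i x) x`.
noncomputable def energyDensity (ω : (Fin d → ℝ) → ℝ) (Pc : (Fin N → ℝ) → (Fin d → ℝ) → ℝ)
    (Ψ : Fin (N + 1) → (Fin d → ℝ) → ℝ) (v : Fin (N + 1) → ℝ) (x : Fin d → ℝ) : ℝ≥0∞ :=
  PiExt ω Pc v x + ENNReal.ofReal (∑ i, v i * Ψ i x)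

theorem energyDensity_ne_top_iff :
    energyDensity ω Pc Ψ v x ≠ ⊤ ↔ v ∈ subSimplex (ω x) := by
  rw [← piExt_ne_top_iff (Pc := Pc)]
  simp [energyDensity]

theorem ratApproximable_energyDensity {K : Set (Fin d → ℝ)}
    (hPcont : ContinuousOn (fun p : (Fin N → ℝ) × (Fin d → ℝ) => Pc p.1 p.2)
      {p | p.2 ∈ K ∧ p.1 ∈ subSimplex (ω p.2)})
    (hx : x ∈ K) : RatApproximable (energyDensity ω Pc Ψ · x) := by
  have hPc : ContinuousOn (fun t => Pc t x) (subSimplex (ω x)) :=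
    hPcont.comp (Continuous.prodMk_left x).continuousOn fun _ ht => ⟨hx, ht⟩
  exact (ratApproximable_piExt hPc).add_ofReal (by fun_prop)

theorem integrable_toReal_energyDensity {μ : Measure (Fin d → ℝ)} [IsFiniteMeasure μ]
    {K : Set (Fin d → ℝ)} (hK : IsCompact K) (hω : ContinuousOn ω K) (hμK : ∀ᵐ x ∂μ, x ∈ K)
    (hPcont : ContinuousOn (fun p : (Fin N → ℝ) × (Fin d → ℝ) => Pc p.1 p.2)
      {p | p.2 ∈ K ∧ p.1 ∈ subSimplex (ω p.2)})
    {M : ℝ} (hPcM : ∀ x ∈ K, ∀ t ∈ subSimplex (ω x), Pc t x ≤ M)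
    (hΨc : ∀ i, ContinuousOn (Ψ i) K) (hΨ0 : ∀ i, ∀ x ∈ K, 0 ≤ Ψ i x)
    {u : (Fin d → ℝ) → Fin (N + 1) → ℝ} (hu : ∀ i, Integrable (fun x => u x i) μ)
    (hdom : ∀ᵐ x ∂μ, u x ∈ subSimplex (ω x)) :
    Integrable (fun x => (energyDensity ω Pc Ψ (u x) x).toReal) μ := by
  have hPi := integrable_toReal_piExt hK.isClosed hω hμK hPcont hPcM
    (aemeasurable_pi_lambda _ fun i => (hu i).aemeasurable) hdom
  have hlin : Integrable (fun x => ∑ i, u x i * Ψ i x) μ :=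
    integrable_finsetSum _ fun i _ => (hu i).mul_of_top_left ((hΨc i).memLp_top hK hμK)
  refine (hPi.add hlin).congr ?_
  filter_upwards [hμK, hdom] with x hx hux
  rw [energyDensity, ENNReal.toReal_add (piExt_ne_top_iff.2 hux) ENNReal.ofReal_ne_top,
    ENNReal.toReal_ofReal (Finset.sum_nonneg fun i _ => mul_nonneg (hux.1 i) (hΨ0 i x hx)),
    Pi.add_apply]

theorem exists_measurableSet_ae_iff_energyDensity_ne_top {μ : Measure (Fin d → ℝ)}
    [IsFiniteMeasure μ] {K : Set (Fin d → ℝ)} (hK : IsCompact K) (hω : ContinuousOn ω K)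
    (hμK : ∀ᵐ x ∂μ, x ∈ K)
    (hPcont : ContinuousOn (fun p : (Fin N → ℝ) × (Fin d → ℝ) => Pc p.1 p.2)
      {p | p.2 ∈ K ∧ p.1 ∈ subSimplex (ω p.2)})
    {M : ℝ} (hPcM : ∀ x ∈ K, ∀ t ∈ subSimplex (ω x), Pc t x ≤ M)
    (hΨc : ∀ i, ContinuousOn (Ψ i) K) (hΨ0 : ∀ i, ∀ x ∈ K, 0 ≤ Ψ i x) (q : Fin (N + 1) → ℝ) :
    ∃ D, MeasurableSet D ∧ (∀ᵐ x ∂μ, x ∈ D ↔ energyDensity ω Pc Ψ q x ≠ ⊤) ∧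
      IntegrableOn (fun x => (energyDensity ω Pc Ψ q x).toReal) D μ := by
  set D := {x | x ∈ K ∧ q ∈ subSimplex (ω x)}
  have hD : MeasurableSet D :=
    ((isClosed_setOf_mem_subSimplex hK.isClosed hω).preimage
      (Continuous.prodMk_right q)).measurableSet
  refine ⟨D, hD, ?_, integrable_toReal_energyDensity hK hω ?_ hPcont hPcM hΨc hΨ0
    (fun i => integrable_const (q i)) ((ae_restrict_mem hD).mono fun _ hx => hx.2)⟩
  · filter_upwards [hμK] with x hx
    simp [D, hx, energyDensity_ne_top_iff]
  · exact (ae_restrict_mem hD).mono fun _ hx => hx.1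

theorem isIntegralSubgradient_energyDensity_iff {μ : Measure (Fin d → ℝ)} [IsFiniteMeasure μ]
    {K : Set (Fin d → ℝ)} (hK : IsCompact K) (hω : ContinuousOn ω K) (hμK : ∀ᵐ x ∂μ, x ∈ K)
    (hPcont : ContinuousOn (fun p : (Fin N → ℝ) × (Fin d → ℝ) => Pc p.1 p.2)
      {p | p.2 ∈ K ∧ p.1 ∈ subSimplex (ω p.2)})
    {M : ℝ} (hPcM : ∀ x ∈ K, ∀ t ∈ subSimplex (ω x), Pc t x ≤ M)
    (hΨc : ∀ i, ContinuousOn (Ψ i) K) (hΨ0 : ∀ i, ∀ x ∈ K, 0 ≤ Ψ i x)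
    {s h : Fin (N + 1) → (Fin d → ℝ) → ℝ} (hs : ∀ i, Integrable (s i) μ)
    (hsdom : ∀ᵐ x ∂μ, (fun i => s i x) ∈ subSimplex (ω x)) (hh : ∀ i, MemLp (h i) ∞ μ) :
    IsIntegralSubgradient (energyDensity ω Pc Ψ) μ s h ↔
      ∀ᵐ x ∂μ, IsSubgradient (PiExt ω Pc · x) (fun i => s i x) (fun i => h i x - Ψ i x) := by
  refine (isIntegralSubgradient_iff_ae_isSubgradient hs hh
    (integrable_toReal_energyDensity hK hω hμK hPcont hPcM hΨc hΨ0 hs hsdom)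
    (hsdom.mono fun _ hx => energyDensity_ne_top_iff.2 hx)
    (exists_measurableSet_ae_iff_energyDensity_ne_top hK hω hμK hPcont hPcM hΨc hΨ0)
    (hμK.mono fun _ hx => ratApproximable_energyDensity hPcont hx)).trans
    (eventually_congr ?_)
  filter_upwards [hμK] with x hx
  exact isSubgradient_add_ofReal_linear_iff fun w hw =>
    Finset.sum_nonneg fun i _ => mul_nonneg ((piExt_ne_top_iff.1 hw).1 i) (hΨ0 i x hx)

end CapillaryEnergy

theorem stmt_9_general {d N : ℕ}
    (Ω : Set (Fin d → ℝ)) (hΩo : IsOpen Ω)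
    (hΩb : Bornology.IsBounded Ω)
    (ω : (Fin d → ℝ) → ℝ) (hωcont : ContinuousOn ω (closure Ω))
    (Pc : (Fin N → ℝ) → (Fin d → ℝ) → ℝ)
    (M : ℝ) (hPcM : ∀ x ∈ closure Ω, ∀ t : Fin N → ℝ,
      (∀ j, 0 ≤ t j) → ∑ j, t j ≤ ω x → Pc t x ≤ M)
    (Ψ : Fin (N + 1) → (Fin d → ℝ) → ℝ)
    (hΨc : ∀ i, ContinuousOn (Ψ i) (closure Ω))
    (hΨ0 : ∀ i, ∀ x ∈ closure Ω, 0 ≤ Ψ i x)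
    (hPcont : ContinuousOn (fun p : (Fin N → ℝ) × (Fin d → ℝ) => Pc p.1 p.2)
      {p : (Fin N → ℝ) × (Fin d → ℝ) |
        p.2 ∈ closure Ω ∧ (∀ j, 0 ≤ p.1 j) ∧ ∑ j, p.1 j ≤ ω p.2})
    (s : Fin (N + 1) → (Fin d → ℝ) → ℝ)
    (hsint : ∀ i, IntegrableOn (s i) Ω)
    (hs0 : ∀ i, ∀ᵐ x ∂(volume.restrict Ω), 0 ≤ s i x)
    (hsat : ∀ᵐ x ∂(volume.restrict Ω), ∑ i, s i x = ω x)
    (h : Fin (N + 1) → (Fin d → ℝ) → ℝ)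
    (hhmeas : ∀ i, AEStronglyMeasurable (h i) (volume.restrict Ω))
    (hhbdd : ∃ C : ℝ, ∀ i, ∀ᵐ x ∂(volume.restrict Ω), |h i x| ≤ C) :
    (∀ shat : Fin (N + 1) → (Fin d → ℝ) → ℝ, (∀ i, IntegrableOn (shat i) Ω) →
        Energy Ω ω Pc Ψ shat ≠ ⊤ →
        (Energy Ω ω Pc Ψ s).toReal + ∑ i, ∫ x in Ω, h i x * (shat i x - s i x)
          ≤ (Energy Ω ω Pc Ψ shat).toReal)
      ↔ (∀ᵐ x ∂(volume.restrict Ω),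
          PiExt ω Pc (fun i => s i x) x ≠ ⊤ ∧
          ∀ v : Fin (N + 1) → ℝ, PiExt ω Pc v x ≠ ⊤ →
            (PiExt ω Pc (fun i => s i x) x).toReal
                + ∑ i, (h i x - Ψ i x) * (v i - s i x)
              ≤ (PiExt ω Pc v x).toReal) := by
  have hΩm : MeasurableSet Ω := hΩo.measurableSet
  have hK : IsCompact (closure Ω) := hΩb.isCompact_closure
  have : IsFiniteMeasure (volume.restrict Ω) :=
    isFiniteMeasure_restrict.2 hΩb.measure_lt_top.ne
  have hμK : ∀ᵐ x ∂(volume.restrict Ω), x ∈ closure Ω :=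
    (ae_restrict_mem hΩm).mono fun _ hx => subset_closure hx
  have hPcM' : ∀ x ∈ closure Ω, ∀ t ∈ subSimplex (ω x), Pc t x ≤ M :=
    fun x hx t ht => hPcM x hx t ht.1 ht.2
  obtain ⟨C, hC⟩ := hhbdd
  have hh : ∀ i, MemLp (h i) ∞ (volume.restrict Ω) := fun i =>
    memLp_top_of_bound (hhmeas i) C (hC i)
  have hsdom : ∀ᵐ x ∂(volume.restrict Ω), (fun i => s i x) ∈ subSimplex (ω x) := by
    filter_upwards [ae_all_iff.2 hs0, hsat] with x hx hσ
    exact ⟨hx, hσ.le⟩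
  exact isIntegralSubgradient_energyDensity_iff hK hωcont hμK hPcont hPcM' hΨc hΨ0 hsint hsdom hh

/-- Characterization of the subdifferential of the energy: for s ∈ 𝒳 ∩ 𝒜 and
h ∈ L^∞(Ω;ℝ^{N+1}), h ∈ ∂E(s) (the integral subgradient inequality holds against
every ŝ ∈ L¹, being trivial when E(ŝ) = +∞) if and only if for a.e. x the vector
h(x) − Ψ(x) is a subgradient at s(x) of the extended convex function Π(·,x). -/
theorem stmt_9 {d N : ℕ} (hN : 1 ≤ N)
    (Ω : Set (Fin d → ℝ)) (hΩo : IsOpen Ω) (hΩconv : Convex ℝ Ω)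
    (hΩb : Bornology.IsBounded Ω)
    (ω : (Fin d → ℝ) → ℝ) (hωcont : ContinuousOn ω (closure Ω))
    (ω₁ ω₂ : ℝ) (hω₁ : 0 < ω₁) (hω₂ : ω₂ < 1)
    (hωb : ∀ x ∈ closure Ω, ω₁ ≤ ω x ∧ ω x ≤ ω₂)
    (Pc : (Fin N → ℝ) → (Fin d → ℝ) → ℝ)
    (hPc0 : ∀ x ∈ closure Ω, ∀ t : Fin N → ℝ,
      (∀ j, 0 ≤ t j) → ∑ j, t j ≤ ω x → 0 ≤ Pc t x)
    (M : ℝ) (hPcM : ∀ x ∈ closure Ω, ∀ t : Fin N → ℝ,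
      (∀ j, 0 ≤ t j) → ∑ j, t j ≤ ω x → Pc t x ≤ M)
    (Ψ : Fin (N + 1) → (Fin d → ℝ) → ℝ)
    (hΨc : ∀ i, ContinuousOn (Ψ i) (closure Ω))
    (hΨ0 : ∀ i, ∀ x ∈ closure Ω, 0 ≤ Ψ i x)
    (m : Fin (N + 1) → ℝ) (hm : ∀ i, 0 < m i)
    (hmass : ∑ i, m i = ∫ x in Ω, ω x)
    (hPcconv : ∀ x ∈ closure Ω,
      ConvexOn ℝ {t : Fin N → ℝ | (∀ j, 0 ≤ t j) ∧ ∑ j, t j ≤ ω x}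
        (fun t => Pc t x))
    (hPcont : ContinuousOn (fun p : (Fin N → ℝ) × (Fin d → ℝ) => Pc p.1 p.2)
      {p : (Fin N → ℝ) × (Fin d → ℝ) |
        p.2 ∈ closure Ω ∧ (∀ j, 0 ≤ p.1 j) ∧ ∑ j, p.1 j ≤ ω p.2})
    (hExtConv : ∀ x ∈ closure Ω, ∀ u v : Fin (N + 1) → ℝ, ∀ a b : ℝ,
      0 ≤ a → 0 ≤ b → a + b = 1 →
      PiExt ω Pc (fun i => a * u i + b * v i) x
        ≤ ENNReal.ofReal a * PiExt ω Pc u x + ENNReal.ofReal b * PiExt ω Pc v x)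
    (s : Fin (N + 1) → (Fin d → ℝ) → ℝ)
    (hsint : ∀ i, IntegrableOn (s i) Ω)
    (hs0 : ∀ i, ∀ᵐ x ∂(volume.restrict Ω), 0 ≤ s i x)
    (hsm : ∀ i, ∫ x in Ω, s i x = m i)
    (hsat : ∀ᵐ x ∂(volume.restrict Ω), ∑ i, s i x = ω x)
    (h : Fin (N + 1) → (Fin d → ℝ) → ℝ)
    (hhmeas : ∀ i, AEStronglyMeasurable (h i) (volume.restrict Ω))
    (hhbdd : ∃ C : ℝ, ∀ i, ∀ᵐ x ∂(volume.restrict Ω), |h i x| ≤ C) :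
    (∀ shat : Fin (N + 1) → (Fin d → ℝ) → ℝ, (∀ i, IntegrableOn (shat i) Ω) →
        Energy Ω ω Pc Ψ shat ≠ ⊤ →
        (Energy Ω ω Pc Ψ s).toReal + ∑ i, ∫ x in Ω, h i x * (shat i x - s i x)
          ≤ (Energy Ω ω Pc Ψ shat).toReal)
      ↔ (∀ᵐ x ∂(volume.restrict Ω),
          PiExt ω Pc (fun i => s i x) x ≠ ⊤ ∧
          ∀ v : Fin (N + 1) → ℝ, PiExt ω Pc v x ≠ ⊤ →
            (PiExt ω Pc (fun i => s i x) x).toReal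
                + ∑ i, (h i x - Ψ i x) * (v i - s i x)
              ≤ (PiExt ω Pc v x).toReal) :=
  stmt_9_general Ω hΩo hΩb ω hωcont Pc M hPcM Ψ hΨc hΨ0 hPcont s hsint hs0 hsat h hhmeas hhbdd
end

section
/- Multicomponent bathtub principle, existence part: the linear functional 𝓕(s) = ∫_Ω F·s dx admits a minimizer over the constraint set 𝒳 ∩ 𝒜. -/
/-!
Writing `sᵢ = θᵢ ω`, the feasible configurations correspond to the fields `θ` in the Hilbert space
`L²(ω dx; ℝ^{N+1})` that take values in the standard simplex and have masses `∫ θᵢ ω = mᵢ`: a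
nonempty, bounded, closed, convex set. In these variables `𝓕` is the continuous linear form
`θ ↦ ⟪F, θ⟫`, and such a form attains its infimum on such a set. Indeed, the points of least norm
`vₙ` of the nested sublevel sets `{⟪F, θ⟫ ≤ inf + 1/(n+1)}` satisfy
`‖vₖ - vₙ‖² ≤ ‖vₖ‖² - ‖vₙ‖²` for `n ≤ k`; as `‖vₙ‖` is nondecreasing and bounded, they form a
Cauchy sequence, whose limit is a minimizer.
-/

open MeasureTheory
open scoped ENNReal

/-- The feasible set `𝒳 ∩ 𝒜` of the multicomponent bathtub problem: vectors of
nonnegative integrable phase contents with prescribed masses `m i` whose sum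
saturates the constraint `ω` almost everywhere on `Ω`. -/
def feasible {d N : ℕ} (Ω : Set (Fin d → ℝ)) (ω : (Fin d → ℝ) → ℝ)
    (m : Fin (N + 1) → ℝ) (s : Fin (N + 1) → (Fin d → ℝ) → ℝ) : Prop :=
  (∀ i, IntegrableOn (s i) Ω) ∧
  (∀ i, ∀ᵐ x ∂(volume.restrict Ω), 0 ≤ s i x) ∧
  (∀ i, ∫ x in Ω, s i x = m i) ∧
  (∀ᵐ x ∂(volume.restrict Ω), ∑ i, s i x = ω x)

/-- The primal linear functional `𝓕(s) = Σ_i ∫_Ω F_i s_i dx`. -/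
noncomputable def primalF {d N : ℕ} (Ω : Set (Fin d → ℝ))
    (F : Fin (N + 1) → (Fin d → ℝ) → ℝ)
    (s : Fin (N + 1) → (Fin d → ℝ) → ℝ) : ℝ :=
  ∑ i, ∫ x in Ω, F i x * s i x

/-- The dual functional `J(α) = ∫_Ω (min_j (F_j + α_j)) ω dx − Σ_i α_i m_i`. -/
noncomputable def dualJ {d N : ℕ} (Ω : Set (Fin d → ℝ)) (ω : (Fin d → ℝ) → ℝ)
    (F : Fin (N + 1) → (Fin d → ℝ) → ℝ) (m : Fin (N + 1) → ℝ)
    (α : Fin (N + 1) → ℝ) : ℝ :=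
  (∫ x in Ω, (⨅ j, (F j x + α j)) * ω x) - ∑ i, α i * m i

open Filter Topology
open scoped RealInnerProductSpace

section Hilbert

variable {E : Type*} [NormedAddCommGroup E] [InnerProductSpace ℝ E] [CompleteSpace E]

theorem exists_norm_sub_sq_le_of_convex {C : Set E} (hne : C.Nonempty) (hcl : IsClosed C)
    (hconv : Convex ℝ C) : ∃ v ∈ C, ∀ w ∈ C, ‖w - v‖ ^ 2 ≤ ‖w‖ ^ 2 - ‖v‖ ^ 2 := by
  obtain ⟨v, hvC, hv⟩ := exists_norm_eq_iInf_of_complete_convex hne hcl.isComplete hconv 0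
  refine ⟨v, hvC, fun w hw => ?_⟩
  have h := (norm_eq_iInf_iff_real_inner_le_zero hconv hvC).1 hv w hw
  rw [zero_sub, inner_neg_left, inner_sub_right, real_inner_self_eq_norm_sq] at h
  rw [norm_sub_sq_real, real_inner_comm]
  linarith

theorem nonempty_iInter_of_antitone_of_convex {K : ℕ → Set E} (hanti : Antitone K)
    (hne : ∀ n, (K n).Nonempty) (hcl : ∀ n, IsClosed (K n)) (hconv : ∀ n, Convex ℝ (K n))
    (hbdd : Bornology.IsBounded (K 0)) : (⋂ n, K n).Nonempty := by
  choose p hpK hp using fun n => exists_norm_sub_sq_le_of_convex (hne n) (hcl n) (hconv n)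
  have hdist : ∀ n k, n ≤ k → dist (p k) (p n) ^ 2 ≤ ‖p k‖ ^ 2 - ‖p n‖ ^ 2 := fun n k hnk => by
    rw [dist_eq_norm]; exact hp n (p k) (hanti hnk (hpK k))
  have hmono : Monotone fun n => ‖p n‖ ^ 2 := fun n k hnk => by
    linarith [hdist n k hnk, sq_nonneg (dist (p k) (p n))]
  obtain ⟨R, hR⟩ := hbdd.exists_norm_le
  have hconv_sq : Tendsto (fun n => ‖p n‖ ^ 2) atTop (𝓝 (⨆ n, ‖p n‖ ^ 2)) :=
    tendsto_atTop_ciSup hmono ⟨R ^ 2, by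
      rintro _ ⟨n, rfl⟩
      exact pow_le_pow_left₀ (norm_nonneg _) (hR _ (hanti (Nat.zero_le n) (hpK n))) 2⟩
  have hcauchy : CauchySeq p := by
    refine Metric.cauchySeq_iff'.2 fun ε hε => ?_
    obtain ⟨N, hN⟩ := Metric.cauchySeq_iff'.1 hconv_sq.cauchySeq (ε ^ 2) (by positivity)
    refine ⟨N, fun n hn => ?_⟩
    have h1 := hdist N n hn
    have h2 := (abs_lt.1 (hN n hn)).2
    exact lt_of_pow_lt_pow_left₀ 2 hε.le (by linarith)
  obtain ⟨q, hq⟩ := cauchySeq_tendsto_of_complete hcauchy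
  exact ⟨q, Set.mem_iInter.2 fun n => (hcl n).mem_of_tendsto hq
    (eventually_atTop.2 ⟨n, fun k hk => hanti hk (hpK k)⟩)⟩

theorem ContinuousLinearMap.exists_isMinOn_of_convex (f : E →L[ℝ] ℝ) {K : Set E}
    (hne : K.Nonempty) (hcl : IsClosed K) (hconv : Convex ℝ K) (hbdd : Bornology.IsBounded K) :
    ∃ x ∈ K, IsMinOn f K x := by
  have hbelow : BddBelow (f '' K) := (f.lipschitz.isBounded_image hbdd).bddBelow
  set c := sInf (f '' K)
  let L : ℕ → Set E := fun n => K ∩ f ⁻¹' Set.Iic (c + 1 / (n + 1))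
  have hL : (⋂ n, L n).Nonempty := by
    refine nonempty_iInter_of_antitone_of_convex (fun n k hnk => ?_) (fun n => ?_)
      (fun n => hcl.inter (isClosed_Iic.preimage f.continuous))
      (fun n => hconv.inter ((convex_Iic _).linear_preimage f.toLinearMap))
      (hbdd.subset Set.inter_subset_left)
    · refine Set.inter_subset_inter_right _ (Set.preimage_mono (Set.Iic_subset_Iic.2 ?_))
      gcongr
    · have hpos : (0 : ℝ) < 1 / (n + 1) := by positivity
      obtain ⟨_, ⟨x, hx, rfl⟩, hlt⟩ :=
        exists_lt_of_csInf_lt (hne.image f) (lt_add_of_pos_right c hpos)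
      exact ⟨x, hx, hlt.le⟩
  obtain ⟨x, hx⟩ := hL
  simp only [Set.mem_iInter, Set.mem_inter_iff, Set.mem_preimage, Set.mem_Iic, L] at hx
  refine ⟨x, (hx 0).1, fun y hy => ?_⟩
  have hfx : f x ≤ c := le_of_forall_pos_lt_add fun ε hε => by
    obtain ⟨n, hn⟩ := exists_nat_one_div_lt hε
    linarith [(hx n).2]
  exact hfx.trans (csInf_le hbelow ⟨y, hy, rfl⟩)

end Hilbert

namespace MeasureTheory.Lp

variable {X E : Type*} [MeasurableSpace X] {μ : Measure X} [NormedAddCommGroup E] {p : ℝ≥0∞}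
  {S : Set E}

theorem isClosed_setOf_ae_mem [Fact (1 ≤ p)] (hS : IsClosed S) :
    IsClosed {f : Lp E p μ | ∀ᵐ x ∂μ, f x ∈ S} :=
  IsSeqClosed.isClosed fun f f₀ hf hlim => by
    obtain ⟨φ, -, hφ⟩ := (tendstoInMeasure_of_tendsto_Lp hlim).exists_seq_tendsto_ae
    filter_upwards [ae_all_iff.2 hf, hφ] with x hx hφx
    exact hS.mem_of_tendsto hφx (Eventually.of_forall fun n => hx _)

theorem convex_setOf_ae_mem [NormedSpace ℝ E] (hS : Convex ℝ S) :
    Convex ℝ {f : Lp E p μ | ∀ᵐ x ∂μ, f x ∈ S} := by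
  intro f hf g hg a b ha hb hab
  filter_upwards [hf, hg, coeFn_add (a • f) (b • g), coeFn_smul a f, coeFn_smul b g]
    with x hfx hgx hadd hsf hsg
  simp only [hadd, Pi.add_apply, hsf, hsg, Pi.smul_apply]
  exact hS hfx hgx ha hb hab

theorem isBounded_setOf_ae_mem [Fact (1 ≤ p)] [IsFiniteMeasure μ] (hS : Bornology.IsBounded S) :
    Bornology.IsBounded {f : Lp E p μ | ∀ᵐ x ∂μ, f x ∈ S} := by
  obtain ⟨R, hR⟩ := hS.exists_norm_le
  refine isBounded_iff_forall_norm_le.2 ⟨_, fun f hf => norm_le_of_ae_bound (C := max R 0)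
    (le_max_right _ _) ?_⟩
  filter_upwards [hf] with x hx
  exact (hR _ hx).trans (le_max_left _ _)

theorem integrable_apply {ι : Type*} [Fintype ι] [IsFiniteMeasure μ]
    (θ : Lp (EuclideanSpace ℝ ι) 2 μ) (i : ι) : Integrable (fun x => θ x i) μ :=
  ((Lp.memLp θ).integrable one_le_two).eval_piLp i

end MeasureTheory.Lp

section WithDensity

variable {X : Type*} [MeasurableSpace X] {ν : Measure X} {ω : X → ℝ}

theorem ae_withDensity_ofReal_iff (hω : AEMeasurable ω ν) {p : X → Prop} :
    (∀ᵐ x ∂ν.withDensity (fun x => ENNReal.ofReal (ω x)), p x) ↔ ∀ᵐ x ∂ν, 0 < ω x → p x := by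
  simp only [ae_withDensity_iff' hω.ennreal_ofReal, ne_eq, ENNReal.ofReal_eq_zero, not_le]

theorem ae_eq_zero_or_of_ae_withDensity_ofReal (hω : AEMeasurable ω ν) (hω0 : 0 ≤ᵐ[ν] ω)
    {p : X → Prop} (h : ∀ᵐ x ∂ν.withDensity (fun x => ENNReal.ofReal (ω x)), p x) :
    ∀ᵐ x ∂ν, ω x = 0 ∨ p x := by
  filter_upwards [(ae_withDensity_ofReal_iff hω).1 h, hω0] with x hx h0
  exact (eq_or_lt_of_le h0).imp Eq.symm hx

theorem integral_withDensity_ofReal (hω : AEMeasurable ω ν) (hω0 : 0 ≤ᵐ[ν] ω) (g : X → ℝ) :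
    ∫ x, g x ∂ν.withDensity (fun x => ENNReal.ofReal (ω x)) = ∫ x, ω x * g x ∂ν := by
  rw [integral_withDensity_eq_integral_toReal_smul₀ hω.ennreal_ofReal
    (Eventually.of_forall fun _ => ENNReal.ofReal_lt_top)]
  refine integral_congr_ae ?_
  filter_upwards [hω0] with x hx
  simp [ENNReal.toReal_ofReal hx]

theorem integrable_withDensity_ofReal_iff (hω : AEMeasurable ω ν) (hω0 : 0 ≤ᵐ[ν] ω)
    {g : X → ℝ} : Integrable g (ν.withDensity fun x => ENNReal.ofReal (ω x)) ↔
      Integrable (fun x => ω x * g x) ν := by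
  rw [integrable_withDensity_iff_integrable_smul₀' hω.ennreal_ofReal
    (Eventually.of_forall fun _ => ENNReal.ofReal_lt_top)]
  refine integrable_congr ?_
  filter_upwards [hω0] with x hx
  simp [ENNReal.toReal_ofReal hx]

end WithDensity

section Bathtub

variable {X ι : Type*} [MeasurableSpace X] [Fintype ι]

def IsBathtubFeasible (ν : Measure X) (ω : X → ℝ) (m : ι → ℝ) (s : ι → X → ℝ) : Prop :=
  (∀ i, Integrable (s i) ν) ∧ (∀ i, ∀ᵐ x ∂ν, 0 ≤ s i x) ∧ (∀ i, ∫ x, s i x ∂ν = m i) ∧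
    ∀ᵐ x ∂ν, ∑ i, s i x = ω x

/-- The fractions `θ = s / ω` of the feasible configurations `s`, as fields in `L²(ω ν; ℝ^ι)`. -/
def phaseFractions (μ : Measure X) (m : ι → ℝ) : Set (Lp (EuclideanSpace ℝ ι) 2 μ) :=
  {θ | ∀ᵐ x ∂μ, θ x ∈ WithLp.ofLp ⁻¹' stdSimplex ℝ ι} ∩ ⋂ i, {θ | ∫ x, θ x i ∂μ = m i}

section PhaseFractions

variable {μ : Measure X} [IsFiniteMeasure μ] {m : ι → ℝ}

theorem integral_apply_eq_inner [DecidableEq ι] (θ : Lp (EuclideanSpace ℝ ι) 2 μ) (i : ι) :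
    ∫ x, θ x i ∂μ = ⟪Lp.const 2 μ (EuclideanSpace.single i (1 : ℝ)), θ⟫ := by
  rw [← indicatorConstLp_univ, L2.inner_indicatorConstLp_eq_setIntegral_inner,
    Measure.restrict_univ]
  simp [EuclideanSpace.inner_single_left]

theorem isClosed_phaseFractions : IsClosed (phaseFractions μ m) := by
  classical
  refine (Lp.isClosed_setOf_ae_mem ((isClosed_stdSimplex ℝ ι).preimage
    (PiLp.continuous_ofLp _ _))).inter (isClosed_iInter fun i => ?_)
  simp_rw [integral_apply_eq_inner]
  exact isClosed_eq (continuous_const.inner continuous_id) continuous_const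

theorem convex_phaseFractions : Convex ℝ (phaseFractions μ m) := by
  classical
  refine (Lp.convex_setOf_ae_mem ((convex_stdSimplex ℝ ι).linear_preimage
    (WithLp.linearEquiv 2 ℝ (ι → ℝ)).toLinearMap)).inter (convex_iInter fun i => ?_)
  simp_rw [integral_apply_eq_inner]
  exact convex_hyperplane (innerₛₗ ℝ _).isLinear _

theorem isBounded_phaseFractions : Bornology.IsBounded (phaseFractions μ m) :=
  (Lp.isBounded_setOf_ae_mem ((PiLp.antilipschitzWith_ofLp 2 _).isBounded_preimage
    (isCompact_stdSimplex ℝ ι).isBounded)).subset Set.inter_subset_left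

end PhaseFractions

variable {ν : Measure X} {ω : X → ℝ} {m : ι → ℝ}

theorem phaseFractions_nonempty (hω : Integrable ω ν) (hω0 : 0 ≤ᵐ[ν] ω) (hm : ∀ i, 0 ≤ m i)
    (hmass : ∑ i, m i = ∫ x, ω x ∂ν) :
    (phaseFractions (ν.withDensity fun x => ENNReal.ofReal (ω x)) m).Nonempty := by
  set μ := ν.withDensity fun x => ENNReal.ofReal (ω x)
  have : IsFiniteMeasure μ := isFiniteMeasure_withDensity_ofReal hω.2
  set M := ∑ i, m i
  have hμ : μ.real Set.univ = M := by
    simpa [hmass] using integral_withDensity_ofReal hω.aemeasurable hω0 (fun _ => 1)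
  have hm0 : M = 0 → ∀ i, m i = 0 := fun hM i =>
    (Finset.sum_eq_zero_iff_of_nonneg fun i _ => hm i).1 hM i (Finset.mem_univ i)
  refine ⟨Lp.const 2 μ (WithLp.toLp 2 fun i => m i / M), ?_, Set.mem_iInter.2 fun i => ?_⟩
  · rcases eq_or_ne M 0 with hM | hM
    · have : μ = 0 := by
        rw [← Measure.measure_univ_eq_zero, ← measureReal_eq_zero_iff, hμ, hM]
      simp [this]
    filter_upwards [Lp.coeFn_const 2 μ (WithLp.toLp 2 fun i => m i / M)] with x hx
    rw [hx]
    refine ⟨fun i => div_nonneg (hm i) (Finset.sum_nonneg fun i _ => hm i), ?_⟩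
    simp only [Function.const_apply, PiLp.toLp_apply, ← Finset.sum_div]
    exact div_self hM
  · change ∫ x, _ ∂μ = m i
    rw [integral_congr_ae (g := fun _ => m i / M)
      ((Lp.coeFn_const 2 μ (WithLp.toLp 2 fun i => m i / M)).mono fun x hx => by rw [hx]; rfl)]
    simp only [integral_const, smul_eq_mul, hμ]
    exact mul_div_cancel_of_imp' fun hM => hm0 hM i

theorem isBathtubFeasible_of_mem_phaseFractions (hω : Integrable ω ν) (hω0 : 0 ≤ᵐ[ν] ω)
    {θ : Lp (EuclideanSpace ℝ ι) 2 (ν.withDensity fun x => ENNReal.ofReal (ω x))}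
    (hθ : θ ∈ phaseFractions _ m) : IsBathtubFeasible ν ω m fun i x => ω x * θ x i := by
  have := isFiniteMeasure_withDensity_ofReal hω.2
  obtain ⟨hθS, hθm⟩ := hθ
  have hθS' := ae_eq_zero_or_of_ae_withDensity_ofReal hω.aemeasurable hω0 hθS
  refine ⟨fun i => (integrable_withDensity_ofReal_iff hω.aemeasurable hω0).1
    (Lp.integrable_apply θ i), fun i => ?_, fun i => ?_, ?_⟩
  · filter_upwards [hθS', hω0] with x hx h0
    rcases hx with h | h
    · simp [h]
    · exact mul_nonneg h0 (h.1 i)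
  · rw [← integral_withDensity_ofReal hω.aemeasurable hω0]
    exact Set.mem_iInter.1 hθm i
  · filter_upwards [hθS'] with x hx
    rcases hx with h | h
    · simp [h]
    · rw [← Finset.mul_sum, h.2, mul_one]

theorem exists_mem_phaseFractions_of_isBathtubFeasible (hω : Integrable ω ν)
    (hω0 : 0 ≤ᵐ[ν] ω) {s : ι → X → ℝ} (hs : IsBathtubFeasible ν ω m s) :
    ∃ θ ∈ phaseFractions (ν.withDensity fun x => ENNReal.ofReal (ω x)) m,
      ∀ i, (fun x => ω x * θ x i) =ᵐ[ν] s i := by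
  set μ := ν.withDensity fun x => ENNReal.ofReal (ω x)
  have : IsFiniteMeasure μ := isFiniteMeasure_withDensity_ofReal hω.2
  obtain ⟨hint, hnonneg, hmass, hsum⟩ := hs
  have hcancel : ∀ i, ∀ᵐ x ∂ν, ω x * (s i x / ω x) = s i x := fun i => by
    filter_upwards [ae_all_iff.2 hnonneg, hsum] with x h0 hx
    refine mul_div_cancel_of_imp' fun hz => le_antisymm ?_ (h0 i)
    linarith [Finset.single_le_sum (fun j _ => h0 j) (Finset.mem_univ i)]
  set v : X → EuclideanSpace ℝ ι := fun x => WithLp.toLp 2 fun i => s i x / ω x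
  have hvS : ∀ᵐ x ∂μ, v x ∈ WithLp.ofLp ⁻¹' stdSimplex ℝ ι := by
    refine (ae_withDensity_ofReal_iff hω.aemeasurable).2 ?_
    filter_upwards [ae_all_iff.2 hnonneg, hsum] with x h0 hx hpos
    refine ⟨fun i => div_nonneg (h0 i) hpos.le, ?_⟩
    simp only [v, ← Finset.sum_div, hx]
    exact div_self hpos.ne'
  have hv : MemLp v 2 μ := memLp_piLp_iff.2 fun i => MemLp.of_bound
    (((hint i).aemeasurable.div hω.aemeasurable).aestronglyMeasurable.mono_ac
      (withDensity_absolutelyContinuous _ _)) 1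
    (hvS.mono fun x hx => by
      simpa [abs_le] using Set.Icc_subset_Icc_left (by norm_num) (mem_Icc_of_mem_stdSimplex hx i))
  have heq : ∀ i, (fun x => ω x * hv.toLp v x i) =ᵐ[ν] s i := fun i => by
    filter_upwards [ae_eq_zero_or_of_ae_withDensity_ofReal hω.aemeasurable hω0 hv.coeFn_toLp,
      hcancel i] with x hx hx'
    rcases hx with h | h
    · rw [← hx', h, zero_mul, zero_mul]
    · rw [h, ← hx']
  refine ⟨hv.toLp v, ⟨?_, Set.mem_iInter.2 fun i => ?_⟩, heq⟩
  · filter_upwards [hv.coeFn_toLp, hvS] with x h1 h2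
    rwa [Set.mem_preimage, h1]
  · change ∫ x, _ ∂μ = m i
    rw [integral_withDensity_ofReal hω.aemeasurable hω0, integral_congr_ae (heq i), hmass i]

theorem exists_inner_eq_sum_integral (hω : Integrable ω ν) (hω0 : 0 ≤ᵐ[ν] ω)
    {F : ι → X → ℝ} (hF : ∀ i, AEStronglyMeasurable (F i) ν) {C : ℝ}
    (hC : ∀ i, ∀ᵐ x ∂ν, |F i x| ≤ C) :
    ∃ G : Lp (EuclideanSpace ℝ ι) 2 (ν.withDensity fun x => ENNReal.ofReal (ω x)),
      ∀ θ, ⟪G, θ⟫ = ∑ i, ∫ x, F i x * (ω x * θ x i) ∂ν := by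
  set μ := ν.withDensity fun x => ENNReal.ofReal (ω x)
  have : IsFiniteMeasure μ := isFiniteMeasure_withDensity_ofReal hω.2
  have hF' : ∀ i, AEStronglyMeasurable (F i) μ :=
    fun i => (hF i).mono_ac (withDensity_absolutelyContinuous _ _)
  have hC' : ∀ i, ∀ᵐ x ∂μ, ‖F i x‖ ≤ C :=
    fun i => (withDensity_absolutelyContinuous _ _).ae_le (hC i)
  have hG : MemLp (fun x => WithLp.toLp 2 fun i => F i x) 2 μ :=
    memLp_piLp_iff.2 fun i => MemLp.of_bound (hF' i) C (hC' i)
  refine ⟨hG.toLp _, fun θ => ?_⟩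
  calc ⟪hG.toLp _, θ⟫ = ∫ x, ∑ i, F i x * θ x i ∂μ := by
        rw [L2.inner_def]
        refine integral_congr_ae ?_
        filter_upwards [hG.coeFn_toLp] with x hx
        simp [hx, PiLp.inner_apply, mul_comm]
    _ = ∑ i, ∫ x, F i x * θ x i ∂μ :=
        integral_finsetSum _ fun i _ => (Lp.integrable_apply θ i).bdd_mul (hF' i) (hC' i)
    _ = ∑ i, ∫ x, F i x * (ω x * θ x i) ∂ν := by
        simp only [μ, integral_withDensity_ofReal hω.aemeasurable hω0, mul_left_comm]

theorem exists_bathtub_minimizer (hω : Integrable ω ν) (hω0 : 0 ≤ᵐ[ν] ω)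
    (hm : ∀ i, 0 ≤ m i) (hmass : ∑ i, m i = ∫ x, ω x ∂ν)
    {F : ι → X → ℝ} (hF : ∀ i, AEStronglyMeasurable (F i) ν) {C : ℝ}
    (hC : ∀ i, ∀ᵐ x ∂ν, |F i x| ≤ C) :
    ∃ sb, IsBathtubFeasible ν ω m sb ∧ ∀ s, IsBathtubFeasible ν ω m s →
      ∑ i, ∫ x, F i x * sb i x ∂ν ≤ ∑ i, ∫ x, F i x * s i x ∂ν := by
  have := isFiniteMeasure_withDensity_ofReal hω.2
  obtain ⟨G, hG⟩ := exists_inner_eq_sum_integral hω hω0 hF hC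
  obtain ⟨θ, hθ, hmin⟩ := (innerSL ℝ G).exists_isMinOn_of_convex
    (phaseFractions_nonempty hω hω0 hm hmass) isClosed_phaseFractions convex_phaseFractions
    isBounded_phaseFractions
  refine ⟨_, isBathtubFeasible_of_mem_phaseFractions hω hω0 hθ, fun s hs => ?_⟩
  obtain ⟨θs, hθs, hθs_eq⟩ := exists_mem_phaseFractions_of_isBathtubFeasible hω hω0 hs
  calc ∑ i, ∫ x, F i x * (ω x * θ x i) ∂ν = ⟪G, θ⟫ := (hG θ).symm
    _ ≤ ⟪G, θs⟫ := hmin hθs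
    _ = ∑ i, ∫ x, F i x * s i x ∂ν := by
        rw [hG θs]
        refine Finset.sum_congr rfl fun i _ => integral_congr_ae ?_
        filter_upwards [hθs_eq i] with x hx
        rw [hx]

end Bathtub

theorem stmt_10_general {d N : ℕ}
    (Ω : Set (Fin d → ℝ))
    (ω : (Fin d → ℝ) → ℝ) (hωint : IntegrableOn ω Ω)
    (hω0 : ∀ᵐ x ∂(volume.restrict Ω), 0 ≤ ω x)
    (m : Fin (N + 1) → ℝ) (hm : ∀ i, 0 < m i)
    (hmass : ∑ i, m i = ∫ x in Ω, ω x)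
    (F : Fin (N + 1) → (Fin d → ℝ) → ℝ)
    (hFmeas : ∀ i, AEStronglyMeasurable (F i) (volume.restrict Ω))
    (hFbdd : ∃ C : ℝ, ∀ i, ∀ᵐ x ∂(volume.restrict Ω), |F i x| ≤ C) :
    ∃ sb : Fin (N + 1) → (Fin d → ℝ) → ℝ,
      feasible Ω ω m sb ∧
      ∀ s, feasible Ω ω m s → primalF Ω F sb ≤ primalF Ω F s := by
  obtain ⟨C, hC⟩ := hFbdd
  exact exists_bathtub_minimizer hωint hω0 (fun i => (hm i).le) hmass hFmeas hC

/-- Multicomponent bathtub principle, existence part: the linear functional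
admits a minimizer over the constraint set. -/
theorem stmt_10 {d N : ℕ}
    (Ω : Set (Fin d → ℝ)) (hΩ : MeasurableSet Ω)
    (ω : (Fin d → ℝ) → ℝ) (hωint : IntegrableOn ω Ω)
    (hω0 : ∀ᵐ x ∂(volume.restrict Ω), 0 ≤ ω x)
    (m : Fin (N + 1) → ℝ) (hm : ∀ i, 0 < m i)
    (hmass : ∑ i, m i = ∫ x in Ω, ω x)
    (F : Fin (N + 1) → (Fin d → ℝ) → ℝ)
    (hFmeas : ∀ i, AEStronglyMeasurable (F i) (volume.restrict Ω))
    (hFbdd : ∃ C : ℝ, ∀ i, ∀ᵐ x ∂(volume.restrict Ω), |F i x| ≤ C) :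
    ∃ sb : Fin (N + 1) → (Fin d → ℝ) → ℝ,
      feasible Ω ω m sb ∧
      ∀ s, feasible Ω ω m s → primalF Ω F sb ≤ primalF Ω F s :=
  stmt_10_general Ω ω hωint hω0 m hm hmass F hFmeas hFbdd
end

section
/- Multicomponent bathtub principle, Lagrange multiplier part: there exists α = (α_0,…,α_N) ∈ ℝ^{N+1} such that, setting λ(x) = min_{0 ≤ j ≤ N} (F_j(x) + α_j), every minimizer s̄ of 𝓕 over 𝒳 ∩ 𝒜 satisfies, for each i ∈ {0,…,N}, F_i(x) + α_i = λ(x) for a.e. x in the set {x ∈ Ω : s̄_i(x) > 0}. -/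
open MeasureTheory
open scoped ENNReal

/-!
Take `α` maximising the dual function `J(α) = ∫ λ_α ω - ∑ α_i m_i`, where
`λ_α = min_j (F_j + α_j)`; a maximiser exists because `J` is continuous, invariant under adding a
constant to `α`, and tends to `-∞` as `max α - min α → ∞`. Differentiating `J` at `α` in the
direction `-1_S` gives Hall's condition `∑_{i ∈ S} m_i ≤ ∫_{U_S} ω`, where `U_S` is the set on
which some phase of `S` attains `λ_α`.

Let `s` be a minimiser and `a` a phase. Call `c` reachable from `b` when `s_c` has positive mass
on `{F_b + α_b = λ_α}`; along such a path, mass of the last phase `c` can be traded for mass of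
`a` at a cost of at most `α_c - α_a` per unit. The phases not reachable from `a` vanish on the
union `U` of the sets `{F_b + α_b = λ_α}` over reachable `b`, so by Hall's condition the reachable
phases, `a` among them, are concentrated on `U`. If `s_a` had mass in one of these sets where `a`
is not optimal, trading it along the path would close a cycle of negative cost.
-/

open Filter Topology

namespace Bathtub

variable {X ι : Type*}

noncomputable def lowerEnvelope (G : ι → X → ℝ) (α : ι → ℝ) (x : X) : ℝ :=
  ⨅ j, (G j x + α j)

def argminSet (G : ι → X → ℝ) (α : ι → ℝ) (i : ι) : Set X :=
  {x | G i x + α i = lowerEnvelope G α x}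

section Envelope

variable {G : ι → X → ℝ} {α β : ι → ℝ} {x : X}

theorem le_lowerEnvelope [Nonempty ι] {a : ℝ} (h : ∀ i, a ≤ G i x + α i) :
    a ≤ lowerEnvelope G α x :=
  le_ciInf h

variable [Fintype ι]

theorem lowerEnvelope_le (i : ι) : lowerEnvelope G α x ≤ G i x + α i :=
  ciInf_le (Finite.bddBelow_range _) i

variable [Nonempty ι]

theorem exists_add_eq_lowerEnvelope : ∃ i, G i x + α i = lowerEnvelope G α x :=
  exists_eq_ciInf_of_finite

theorem lowerEnvelope_mono (h : ∀ i, α i ≤ β i) : lowerEnvelope G α x ≤ lowerEnvelope G β x :=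
  le_lowerEnvelope fun i => (lowerEnvelope_le i).trans (by linarith [h i])

theorem lowerEnvelope_sub_const (c : ℝ) :
    lowerEnvelope G (fun i => α i - c) x = lowerEnvelope G α x - c := by
  obtain ⟨i, hi⟩ := exists_add_eq_lowerEnvelope (G := G) (α := α) (x := x)
  refine le_antisymm ?_ (le_lowerEnvelope fun j => ?_)
  · linarith [lowerEnvelope_le (G := G) (α := fun i => α i - c) (x := x) i]
  · linarith [lowerEnvelope_le (G := G) (α := α) (x := x) j]

theorem lowerEnvelope_le_add_dist : lowerEnvelope G α x ≤ lowerEnvelope G β x + dist α β := by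
  obtain ⟨i, hi⟩ := exists_add_eq_lowerEnvelope (G := G) (α := β) (x := x)
  have hαβ : α i - β i ≤ dist α β := (le_abs_self _).trans (dist_le_pi_dist α β i)
  linarith [lowerEnvelope_le (G := G) (α := α) (x := x) i]

theorem abs_lowerEnvelope_sub_le : |lowerEnvelope G α x - lowerEnvelope G β x| ≤ dist α β :=
  abs_sub_le_iff.2 ⟨by linarith [lowerEnvelope_le_add_dist (G := G) (α := α) (β := β) (x := x)],
    by linarith [lowerEnvelope_le_add_dist (G := G) (α := β) (β := α) (x := x), dist_comm α β]⟩

theorem abs_lowerEnvelope_le {C : ℝ} (hC : ∀ i, |G i x| ≤ C) : |lowerEnvelope G α x| ≤ C + ‖α‖ := by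
  have hα : ∀ i, |α i| ≤ ‖α‖ := fun i => norm_le_pi_norm α i
  obtain ⟨i, hi⟩ := exists_add_eq_lowerEnvelope (G := G) (α := α) (x := x)
  refine abs_le.2 ⟨le_lowerEnvelope fun j => ?_, ?_⟩
  · linarith [neg_abs_le (G j x), neg_abs_le (α j), hC j, hα j]
  · linarith [le_abs_self (G i x), le_abs_self (α i), hC i, hα i]

variable {S : Finset ι} {t : ℝ}

theorem lowerEnvelope_sub_indicator_mem_Icc (ht : 0 ≤ t) :
    lowerEnvelope G (α - (S : Set ι).indicator fun _ => t) x ∈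
      Set.Icc (lowerEnvelope G α x - t) (lowerEnvelope G α x) := by
  have hind : ∀ i, (S : Set ι).indicator (fun _ => t) i ∈ Set.Icc 0 t := fun i => by
    by_cases hi : i ∈ (S : Set ι) <;> simp [hi, ht]
  refine ⟨?_, lowerEnvelope_mono fun i => by simp [(hind i).1]⟩
  rw [← lowerEnvelope_sub_const]
  exact lowerEnvelope_mono fun i => by dsimp only [Pi.sub_apply]; linarith [(hind i).2]

theorem lowerEnvelope_sub_indicator_of_mem (ht : 0 ≤ t) (hx : x ∈ ⋃ i ∈ S, argminSet G α i) :
    lowerEnvelope G (α - (S : Set ι).indicator fun _ => t) x = lowerEnvelope G α x - t := by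
  obtain ⟨i, hi, hxi⟩ : ∃ i ∈ S, G i x + α i = lowerEnvelope G α x := by
    simpa [argminSet] using hx
  have := lowerEnvelope_le (G := G) (α := α - (S : Set ι).indicator fun _ => t) (x := x) i
  simp only [Pi.sub_apply, Set.indicator_of_mem (Finset.mem_coe.2 hi)] at this
  exact le_antisymm (by linarith) (lowerEnvelope_sub_indicator_mem_Icc ht).1

theorem eventually_lowerEnvelope_sub_indicator_eq (hx : x ∉ ⋃ i ∈ S, argminSet G α i) :
    ∀ᶠ t in 𝓝[>] 0,
      lowerEnvelope G (α - (S : Set ι).indicator fun _ => t) x = lowerEnvelope G α x := by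
  have hgap : ∀ i ∈ S, 0 < G i x + α i - lowerEnvelope G α x := fun i hi =>
    sub_pos.2 <| (lowerEnvelope_le i).lt_of_ne fun h => hx <| by
      simpa [argminSet] using ⟨i, hi, h.symm⟩
  have hsmall : ∀ᶠ t in 𝓝 0, ∀ i ∈ S, t < G i x + α i - lowerEnvelope G α x :=
    (Filter.eventually_all_finset S).2 fun i hi => eventually_lt_nhds (hgap i hi)
  filter_upwards [nhdsWithin_le_nhds hsmall, self_mem_nhdsWithin] with t ht (htpos : 0 < t)
  refine le_antisymm (lowerEnvelope_sub_indicator_mem_Icc htpos.le).2 (le_lowerEnvelope fun i => ?_)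
  by_cases hi : i ∈ S
  · simp only [Pi.sub_apply, Set.indicator_of_mem (Finset.mem_coe.2 hi)]
    linarith [ht i hi]
  · simpa [hi] using lowerEnvelope_le i

end Envelope

variable [Fintype ι] [MeasurableSpace X]

section Measurability

variable {G : ι → X → ℝ}

theorem measurable_lowerEnvelope (hG : ∀ i, Measurable (G i)) (α : ι → ℝ) :
    Measurable (lowerEnvelope G α) :=
  Measurable.iInf fun j => (hG j).add_const _

theorem measurableSet_argminSet (hG : ∀ i, Measurable (G i)) (α : ι → ℝ) (i : ι) :
    MeasurableSet (argminSet G α i) :=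
  measurableSet_eq_fun ((hG i).add_const _) (measurable_lowerEnvelope hG α)

end Measurability

noncomputable def dual (μ : Measure X) (ω : X → ℝ) (G : ι → X → ℝ) (m α : ι → ℝ) : ℝ :=
  ∫ x, lowerEnvelope G α x * ω x ∂μ - ∑ i, α i * m i

section Dual

variable [Nonempty ι] {μ : Measure X} {ω : X → ℝ} {G : ι → X → ℝ} {m : ι → ℝ} {C : ℝ}

theorem integrable_lowerEnvelope_mul (hω : Integrable ω μ) (hG : ∀ i, Measurable (G i))
    (hC : ∀ i, ∀ᵐ x ∂μ, |G i x| ≤ C) (α : ι → ℝ) :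
    Integrable (fun x => lowerEnvelope G α x * ω x) μ :=
  hω.bdd_mul (measurable_lowerEnvelope hG α).aestronglyMeasurable <| by
    filter_upwards [ae_all_iff.2 hC] with x hx
    exact abs_lowerEnvelope_le hx

theorem lipschitzWith_integral_lowerEnvelope_mul (hω0 : 0 ≤ᵐ[μ] ω) (hω : Integrable ω μ)
    (hG : ∀ i, Measurable (G i)) (hC : ∀ i, ∀ᵐ x ∂μ, |G i x| ≤ C) :
    LipschitzWith (∫ x, ω x ∂μ).toNNReal fun α => ∫ x, lowerEnvelope G α x * ω x ∂μ := by
  refine LipschitzWith.of_dist_le' fun α β => ?_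
  rw [dist_eq_norm, ← integral_sub (integrable_lowerEnvelope_mul hω hG hC α)
    (integrable_lowerEnvelope_mul hω hG hC β), ← integral_mul_const]
  refine norm_integral_le_of_norm_le (hω.mul_const _) ?_
  filter_upwards [hω0] with x hx
  rw [← sub_mul, norm_mul, Real.norm_eq_abs, Real.norm_of_nonneg hx, mul_comm]
  exact mul_le_mul_of_nonneg_left abs_lowerEnvelope_sub_le hx

theorem continuous_dual (hω0 : 0 ≤ᵐ[μ] ω) (hω : Integrable ω μ) (hG : ∀ i, Measurable (G i))
    (hC : ∀ i, ∀ᵐ x ∂μ, |G i x| ≤ C) : Continuous (dual μ ω G m) :=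
  (lipschitzWith_integral_lowerEnvelope_mul hω0 hω hG hC).continuous.sub (by fun_prop)

theorem dual_sub_const (hω : Integrable ω μ) (hG : ∀ i, Measurable (G i))
    (hC : ∀ i, ∀ᵐ x ∂μ, |G i x| ≤ C) (hmass : ∑ i, m i = ∫ x, ω x ∂μ) (α : ι → ℝ) (c : ℝ) :
    dual μ ω G m (fun i => α i - c) = dual μ ω G m α := by
  have hint : ∫ x, lowerEnvelope G (fun i => α i - c) x * ω x ∂μ
      = ∫ x, lowerEnvelope G α x * ω x ∂μ - c * ∫ x, ω x ∂μ := by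
    rw [← integral_const_mul, ← integral_sub (integrable_lowerEnvelope_mul hω hG hC α)
      (hω.const_mul c)]
    simp only [lowerEnvelope_sub_const, sub_mul]
  simp only [dual, hint, sub_mul, Finset.sum_sub_distrib, ← Finset.mul_sum, hmass]
  ring

theorem dual_le (hω0 : 0 ≤ᵐ[μ] ω) (hω : Integrable ω μ) (hG : ∀ i, Measurable (G i))
    (hC : ∀ i, ∀ᵐ x ∂μ, |G i x| ≤ C) (α : ι → ℝ) (i : ι) :
    dual μ ω G m α ≤ (C + α i) * ∫ x, ω x ∂μ - ∑ j, α j * m j := by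
  rw [dual, ← integral_const_mul]
  refine sub_le_sub_right (integral_mono_ae (integrable_lowerEnvelope_mul hω hG hC α)
    (hω.const_mul _) ?_) _
  filter_upwards [hω0, hC i] with x hx hCx
  exact mul_le_mul_of_nonneg_right ((lowerEnvelope_le i).trans
    (by linarith [le_abs_self (G i x)])) hx

theorem neg_mul_le_dual_zero (hω0 : 0 ≤ᵐ[μ] ω) (hω : Integrable ω μ)
    (hG : ∀ i, Measurable (G i)) (hC : ∀ i, ∀ᵐ x ∂μ, |G i x| ≤ C) :
    -(C * ∫ x, ω x ∂μ) ≤ dual μ ω G m 0 := by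
  rw [dual, ← integral_const_mul, ← integral_neg]
  simp only [Pi.zero_apply, zero_mul, Finset.sum_const_zero, sub_zero]
  refine integral_mono_ae (hω.const_mul C).neg (integrable_lowerEnvelope_mul hω hG hC 0) ?_
  filter_upwards [hω0, ae_all_iff.2 hC] with x (hx : 0 ≤ ω x) hCx
  have := (abs_le.1 (abs_lowerEnvelope_le (α := 0) hCx)).1
  rw [norm_zero, add_zero] at this
  nlinarith

theorem exists_forall_dual_le (hω0 : 0 ≤ᵐ[μ] ω) (hω : Integrable ω μ) (hm : ∀ i, 0 < m i)
    (hmass : ∑ i, m i = ∫ x, ω x ∂μ) (hG : ∀ i, Measurable (G i))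
    (hC : ∀ i, ∀ᵐ x ∂μ, |G i x| ≤ C) : ∃ α, ∀ β, dual μ ω G m β ≤ dual μ ω G m α := by
  set W := ∫ x, ω x ∂μ
  have hW : 0 ≤ W := integral_nonneg_of_ae hω0
  obtain ⟨i₀, hi₀⟩ := Finite.exists_min m
  set R := 2 * |C| * W / m i₀
  have hR : 0 ≤ R := div_nonneg (by positivity) (hm i₀).le
  obtain ⟨α, -, hα⟩ := (isCompact_Icc (a := (0 : ι → ℝ)) (b := fun _ => R)).exists_isMaxOn
    (Set.nonempty_Icc.2 fun _ => hR) (continuous_dual hω0 hω hG hC).continuousOn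
  refine ⟨α, fun β => ?_⟩
  -- by shift invariance of `dual` we may assume that the smallest coordinate of `β` is `0`
  obtain ⟨i₁, hi₁⟩ := exists_eq_ciInf_of_finite (f := β)
  have hγ : ∀ i, 0 ≤ β i - β i₁ := fun i =>
    sub_nonneg.2 (hi₁ ▸ ciInf_le (Finite.bddBelow_range β) i)
  rw [← dual_sub_const hω hG hC hmass β (β i₁)]
  by_cases hbdd : ∀ i, β i - β i₁ ≤ R
  · exact hα ⟨hγ, hbdd⟩
  simp only [not_forall, not_le] at hbdd
  obtain ⟨i₂, hi₂⟩ := hbdd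
  have hsum : R * m i₀ ≤ ∑ j, (β j - β i₁) * m j :=
    calc R * m i₀ ≤ (β i₂ - β i₁) * m i₂ := mul_le_mul hi₂.le (hi₀ i₂) (hm i₀).le (hγ i₂)
      _ ≤ _ := Finset.single_le_sum (fun j _ => mul_nonneg (hγ j) (hm j).le) (Finset.mem_univ i₂)
  have hRm : R * m i₀ = 2 * |C| * W := div_mul_cancel₀ _ (hm i₀).ne'
  calc dual μ ω G m (fun i => β i - β i₁)
      ≤ (C + (β i₁ - β i₁)) * W - ∑ j, (β j - β i₁) * m j := dual_le hω0 hω hG hC _ i₁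
    _ ≤ -(C * W) := by nlinarith [le_abs_self C]
    _ ≤ dual μ ω G m 0 := neg_mul_le_dual_zero hω0 hω hG hC
    _ ≤ dual μ ω G m α := hα ⟨le_rfl, fun _ => hR⟩

theorem tendsto_integral_lowerEnvelope_slope (hω0 : 0 ≤ᵐ[μ] ω) (hω : Integrable ω μ)
    (hG : ∀ i, Measurable (G i)) (α : ι → ℝ) (S : Finset ι) :
    Tendsto (fun t => ∫ x, (lowerEnvelope G α x -
        lowerEnvelope G (α - (S : Set ι).indicator fun _ => t) x) / t * ω x ∂μ)
      (𝓝[>] 0) (𝓝 (∫ x in ⋃ i ∈ S, argminSet G α i, ω x ∂μ)) := by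
  set U := ⋃ i ∈ S, argminSet G α i
  have hU : MeasurableSet U := S.measurableSet_biUnion fun i _ => measurableSet_argminSet hG α i
  have hslope : ∀ t > 0, ∀ x, (lowerEnvelope G α x -
      lowerEnvelope G (α - (S : Set ι).indicator fun _ => t) x) / t ∈ Set.Icc 0 1 :=
    fun t ht x => by
      have h := lowerEnvelope_sub_indicator_mem_Icc (G := G) (α := α) (S := S) (x := x) ht.le
      exact ⟨div_nonneg (by linarith [h.2]) ht.le, (div_le_one ht).2 (by linarith [h.1])⟩
  rw [← integral_indicator hU]
  refine tendsto_integral_filter_of_dominated_convergence ω (Eventually.of_forall fun t => ?_)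
    (eventually_nhdsWithin_of_forall fun t ht => ?_) hω (Eventually.of_forall fun x => ?_)
  · exact (((measurable_lowerEnvelope hG α).sub (measurable_lowerEnvelope hG _)).div_const
      t).aestronglyMeasurable.mul hω.aestronglyMeasurable
  · filter_upwards [hω0] with x (hx : 0 ≤ ω x)
    rw [norm_mul, Real.norm_of_nonneg (hslope t ht x).1, Real.norm_of_nonneg hx]
    exact mul_le_of_le_one_left hx (hslope t ht x).2
  · by_cases hx : x ∈ U
    · rw [Set.indicator_of_mem hx]
      refine tendsto_const_nhds.congr' (eventually_nhdsWithin_of_forall fun t (ht : 0 < t) => ?_)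
      dsimp only
      rw [lowerEnvelope_sub_indicator_of_mem ht.le hx, sub_sub_cancel, div_self ht.ne', one_mul]
    · rw [Set.indicator_of_notMem hx]
      refine tendsto_const_nhds.congr' ((eventually_lowerEnvelope_sub_indicator_eq hx).mono
        fun t ht => ?_)
      dsimp only
      rw [ht, sub_self, zero_div, zero_mul]

theorem sum_le_setIntegral_of_forall_dual_le (hω0 : 0 ≤ᵐ[μ] ω) (hω : Integrable ω μ)
    (hG : ∀ i, Measurable (G i)) (hC : ∀ i, ∀ᵐ x ∂μ, |G i x| ≤ C) {α : ι → ℝ}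
    (hα : ∀ β, dual μ ω G m β ≤ dual μ ω G m α) (S : Finset ι) :
    ∑ i ∈ S, m i ≤ ∫ x in ⋃ i ∈ S, argminSet G α i, ω x ∂μ := by
  refine ge_of_tendsto (tendsto_integral_lowerEnvelope_slope hω0 hω hG α S)
    (eventually_nhdsWithin_of_forall fun t (ht : 0 < t) => ?_)
  set β := α - (S : Set ι).indicator fun _ => t
  have hsum : ∑ i, β i * m i = ∑ i, α i * m i - t * ∑ i ∈ S, m i := by
    simp only [β, Pi.sub_apply, sub_mul, Finset.sum_sub_distrib, ← Set.indicator_mul_left,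
      Finset.sum_indicator_subset _ (Finset.subset_univ S), Finset.mul_sum]
  have hint : ∫ x, (lowerEnvelope G α x - lowerEnvelope G β x) / t * ω x ∂μ
      = (∫ x, lowerEnvelope G α x * ω x ∂μ - ∫ x, lowerEnvelope G β x * ω x ∂μ) / t := by
    rw [← integral_sub (integrable_lowerEnvelope_mul hω hG hC α)
      (integrable_lowerEnvelope_mul hω hG hC β), ← integral_div]
    congr 1 with x
    ring
  have hdual := hα β
  simp only [dual, hsum] at hdual
  rw [hint, le_div_iff₀ ht]
  linarith

end Dual

structure IsFeasible (μ : Measure X) (ω : X → ℝ) (m : ι → ℝ) (s : ι → X → ℝ) : Prop where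
  integrable : ∀ i, Integrable (s i) μ
  nonneg : ∀ i, ∀ᵐ x ∂μ, 0 ≤ s i x
  integral_eq : ∀ i, ∫ x, s i x ∂μ = m i
  sum_eq : ∀ᵐ x ∂μ, ∑ i, s i x = ω x

noncomputable def cost (μ : Measure X) (G s : ι → X → ℝ) : ℝ :=
  ∑ i, ∫ x, G i x * s i x ∂μ

/-- A perturbation `u` of `s` that moves one unit of mass from phase `b` to phase `a`, preserves
the pointwise total, keeps `s + t • u` nonnegative for `0 < t ≤ 1 / (1 + L)`, and changes the
cost at rate at most `κ`. -/
def CanTransfer [DecidableEq ι] (μ : Measure X) (G s : ι → X → ℝ) (b a : ι) (κ : ℝ) : Prop :=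
  ∃ (u : ι → X → ℝ) (L : ℝ), 0 ≤ L ∧ (∀ i, Integrable (u i) μ) ∧ (∀ x, ∑ i, u i x = 0) ∧
    (∀ i, ∫ x, u i x ∂μ = (Pi.single a 1 - Pi.single b 1 : ι → ℝ) i) ∧
    (∀ i, ∀ᵐ x ∂μ, -(L * s i x) ≤ u i x) ∧ cost μ G u ≤ κ

section Primal

variable {μ : Measure X} {ω : X → ℝ} {G s u : ι → X → ℝ} {m : ι → ℝ} {C : ℝ}

theorem cost_add_mul (hG : ∀ i, Measurable (G i)) (hC : ∀ i, ∀ᵐ x ∂μ, |G i x| ≤ C)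
    (hs : ∀ i, Integrable (s i) μ) (hu : ∀ i, Integrable (u i) μ) (t : ℝ) :
    cost μ G (fun i x => s i x + t * u i x) = cost μ G s + t * cost μ G u := by
  simp only [cost, Finset.mul_sum, ← Finset.sum_add_distrib, ← integral_const_mul,
    ← integral_add ((hs _).bdd_mul (hG _).aestronglyMeasurable (hC _))
      (((hu _).bdd_mul (hG _).aestronglyMeasurable (hC _)).const_mul t)]
  congr 1 with i
  congr 1 with x
  ring

theorem ae_restrict_eq_zero_of_setIntegral_nonpos {f : X → ℝ} {D : Set X}
    (hf0 : ∀ᵐ x ∂μ.restrict D, 0 ≤ f x) (hf : IntegrableOn f D μ)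
    (h : ∫ x in D, f x ∂μ ≤ 0) : ∀ᵐ x ∂μ.restrict D, f x = 0 :=
  (setIntegral_eq_zero_iff_of_nonneg_ae hf0 hf).1
    (le_antisymm h (setIntegral_nonneg_of_ae_restrict hf0))

theorem IsFeasible.setIntegral_eq_of_sum_le (hs : IsFeasible μ ω m s) {R : Finset ι}
    {U : Set X} (hout : ∀ k ∉ R, ∫ x in U, s k x ∂μ = 0)
    (hR : ∑ k ∈ R, m k ≤ ∫ x in U, ω x ∂μ) {k : ι} (hk : k ∈ R) :
    ∫ x in U, s k x ∂μ = m k := by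
  have hle : ∀ k ∈ R, ∫ x in U, s k x ∂μ ≤ m k := fun k _ =>
    hs.integral_eq k ▸ setIntegral_le_integral (hs.integrable k) (hs.nonneg k)
  have hU : ∫ x in U, ω x ∂μ = ∑ k ∈ R, ∫ x in U, s k x ∂μ := by
    rw [Finset.sum_subset (Finset.subset_univ R) fun k _ hk => hout k hk,
      ← integral_finsetSum _ fun k _ => (hs.integrable k).integrableOn]
    exact integral_congr_ae (ae_restrict_of_ae (hs.sum_eq.mono fun x hx => hx.symm))
  exact (Finset.sum_eq_sum_iff_of_le hle).1 (le_antisymm (Finset.sum_le_sum hle) (hU ▸ hR)) k hk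

theorem setIntegral_argminSet_sub_mul (hG : ∀ i, Measurable (G i))
    (hC : ∀ i, ∀ᵐ x ∂μ, |G i x| ≤ C) {f : X → ℝ} (hf : Integrable f μ) (α : ι → ℝ) (b c : ι) :
    ∫ x in argminSet G α b, (G b x - G c x) * f x ∂μ
      = (α c - α b) * ∫ x in argminSet G α b, f x ∂μ
        - ∫ x in argminSet G α b, (G c x + α c - lowerEnvelope G α x) * f x ∂μ := by
  have hbc : ∀ᵐ x ∂μ, ‖G b x - G c x‖ ≤ 2 * C := by
    filter_upwards [hC b, hC c] with x hb hc
    rw [Real.norm_eq_abs]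
    linarith [abs_sub (G b x) (G c x)]
  have hgap : Set.EqOn (fun x => (G c x + α c - lowerEnvelope G α x) * f x)
      (fun x => (α c - α b) * f x - (G b x - G c x) * f x) (argminSet G α b) := by
    intro x (hx : G b x + α b = lowerEnvelope G α x)
    simp only [← hx]
    ring
  rw [setIntegral_congr_fun (measurableSet_argminSet hG α b) hgap,
    integral_sub (hf.integrableOn.const_mul _)
      (hf.bdd_mul (f := fun x => G b x - G c x) ((hG b).sub (hG c)).aestronglyMeasurable
        hbc).integrableOn,
    integral_const_mul]
  ring

theorem setIntegral_gap_mul_nonneg (hs : IsFeasible μ ω m s) (α : ι → ℝ) (D : Set X) (c : ι) :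
    0 ≤ ∫ x in D, (G c x + α c - lowerEnvelope G α x) * s c x ∂μ :=
  setIntegral_nonneg_of_ae_restrict <| ae_restrict_of_ae <| (hs.nonneg c).mono fun _ hx =>
    mul_nonneg (sub_nonneg.2 (lowerEnvelope_le c)) hx

theorem integrable_gap_mul [Nonempty ι] (hG : ∀ i, Measurable (G i))
    (hC : ∀ i, ∀ᵐ x ∂μ, |G i x| ≤ C) {f : X → ℝ} (hf : Integrable f μ) (α : ι → ℝ) (a : ι) :
    Integrable (fun x => (G a x + α a - lowerEnvelope G α x) * f x) μ := by
  refine hf.bdd_mul (c := 2 * (C + ‖α‖))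
    (((hG a).add_const _).sub (measurable_lowerEnvelope hG α)).aestronglyMeasurable ?_
  filter_upwards [ae_all_iff.2 hC] with x hx
  have hα : |α a| ≤ ‖α‖ := norm_le_pi_norm α a
  rw [Real.norm_eq_abs]
  linarith [abs_sub (G a x + α a) (lowerEnvelope G α x), abs_add_le (G a x) (α a), hx a,
    abs_lowerEnvelope_le (α := α) hx]

section Transfer

variable [DecidableEq ι] {a b c : ι} {κ : ℝ}

theorem canTransfer_self (a : ι) : CanTransfer μ G s a a 0 :=
  ⟨0, 0, le_rfl, fun _ => integrable_zero _ _ _, by simp, by simp,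
    fun _ => Eventually.of_forall fun _ => by simp, by simp [cost]⟩

theorem CanTransfer.mono {κ' : ℝ} (h : CanTransfer μ G s b a κ) (hκ : κ ≤ κ') :
    CanTransfer μ G s b a κ' :=
  let ⟨u, L, hL, hu, hsum, hmass, hlow, hcost⟩ := h
  ⟨u, L, hL, hu, hsum, hmass, hlow, hcost.trans hκ⟩

/-- Extend a transfer from `b` by converting the mass of phase `c` on `D` into phase `b`. -/
theorem CanTransfer.step (h : CanTransfer μ G s b a κ) (hs0 : ∀ i, ∀ᵐ x ∂μ, 0 ≤ s i x)
    (hsc : Integrable (s c) μ) (hG : ∀ i, Measurable (G i)) (hC : ∀ i, ∀ᵐ x ∂μ, |G i x| ≤ C)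
    {D : Set X} (hD : MeasurableSet D) (hM : 0 < ∫ x in D, s c x ∂μ) :
    CanTransfer μ G s c a
      (κ + (∫ x in D, (G b x - G c x) * s c x ∂μ) / ∫ x in D, s c x ∂μ) := by
  obtain ⟨u, L, hL, hu, hsum, hmass, hlow, hcost⟩ := h
  set M := ∫ x in D, s c x ∂μ
  set v : ι → X → ℝ := fun i x => (Pi.single b 1 - Pi.single c 1 : ι → ℝ) i * D.indicator (s c) x
  have hv : ∀ i, Integrable (v i) μ := fun i => (hsc.indicator hD).const_mul _
  refine ⟨fun i x => u i x + M⁻¹ * v i x, L + M⁻¹, by positivity,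
    fun i => (hu i).add ((hv i).const_mul _), fun x => ?_, fun i => ?_, fun i => ?_, ?_⟩
  · simp [v, Finset.sum_add_distrib, hsum, ← Finset.mul_sum, ← Finset.sum_mul,
      Finset.sum_sub_distrib]
  · rw [integral_add (hu i) ((hv i).const_mul _), integral_const_mul, integral_const_mul,
      integral_indicator hD, hmass i]
    simp only [Pi.sub_apply]
    field_simp
    ring
  · filter_upwards [hlow i, hs0 i, hs0 c] with x hx hsi hsc0
    have hind : 0 ≤ D.indicator (s c) x ∧ D.indicator (s c) x ≤ s c x := by
      by_cases hxD : x ∈ D <;> simp [hxD, hsc0]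
    have hMinv : 0 < M⁻¹ := inv_pos.2 hM
    by_cases hic : i = c
    · subst hic
      have : -1 ≤ (Pi.single b 1 - Pi.single i 1 : ι → ℝ) i := by
        simp only [Pi.sub_apply, Pi.single_apply]; split_ifs <;> norm_num
      nlinarith [mul_le_mul_of_nonneg_right this hind.1]
    · have : 0 ≤ (Pi.single b 1 - Pi.single c 1 : ι → ℝ) i := by
        simp only [Pi.sub_apply, Pi.single_apply, if_neg hic]; split_ifs <;> norm_num
      nlinarith [mul_nonneg this hind.1]
  · have hGv : ∀ i, Integrable (fun x => G i x * D.indicator (s c) x) μ := fun i =>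
      (hsc.indicator hD).bdd_mul (hG i).aestronglyMeasurable (hC i)
    have hcost_v : cost μ G v = ∫ x in D, (G b x - G c x) * s c x ∂μ :=
      calc cost μ G v = ∑ i, (Pi.single b 1 - Pi.single c 1 : ι → ℝ) i *
            ∫ x, G i x * D.indicator (s c) x ∂μ := by
            simp only [cost, v, ← integral_const_mul]
            congr 1 with i
            congr 1 with x
            ring
        _ = ∫ x, G b x * D.indicator (s c) x ∂μ - ∫ x, G c x * D.indicator (s c) x ∂μ := by
            simp [Pi.single_apply, sub_mul, Finset.sum_sub_distrib]
        _ = ∫ x in D, (G b x - G c x) * s c x ∂μ := by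
            rw [← integral_sub (hGv b) (hGv c), ← integral_indicator hD]
            congr 1 with x
            by_cases hx : x ∈ D <;> simp [hx, sub_mul]
    rw [cost_add_mul hG hC hu hv, hcost_v, div_eq_inv_mul]
    linarith

theorem CanTransfer.nonneg_of_isMinOn (h : CanTransfer μ G s a a κ) (hs : IsFeasible μ ω m s)
    (hmin : IsMinOn (cost μ G) {s | IsFeasible μ ω m s} s) (hG : ∀ i, Measurable (G i))
    (hC : ∀ i, ∀ᵐ x ∂μ, |G i x| ≤ C) : 0 ≤ κ := by
  obtain ⟨u, L, hL, hu, hsum, hmass, hlow, hcost⟩ := h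
  set t := (1 + L)⁻¹
  have ht : 0 < t := by positivity
  have htL : t * L ≤ 1 := by rw [inv_mul_le_iff₀ (by positivity)]; linarith
  have hfeas : IsFeasible μ ω m fun i x => s i x + t * u i x :=
    { integrable := fun i => (hs.integrable i).add ((hu i).const_mul t)
      nonneg := fun i => by
        filter_upwards [hlow i, hs.nonneg i] with x hx hsx
        nlinarith [mul_le_mul_of_nonneg_left hx ht.le, mul_nonneg (sub_nonneg.2 htL) hsx]
      integral_eq := fun i => by
        rw [integral_add (hs.integrable i) ((hu i).const_mul t), integral_const_mul, hmass i,
          hs.integral_eq i]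
        simp
      sum_eq := by
        filter_upwards [hs.sum_eq] with x hx
        rw [Finset.sum_add_distrib, ← Finset.mul_sum, hsum x, mul_zero, add_zero, hx] }
  have hle := isMinOn_iff.1 hmin _ hfeas
  rw [cost_add_mul hG hC hs.integrable hu] at hle
  nlinarith

theorem CanTransfer.step_argminSet (h : CanTransfer μ G s b a κ) (hs : IsFeasible μ ω m s)
    (hG : ∀ i, Measurable (G i)) (hC : ∀ i, ∀ᵐ x ∂μ, |G i x| ≤ C) (α : ι → ℝ)
    (hM : 0 < ∫ x in argminSet G α b, s c x ∂μ) :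
    CanTransfer μ G s c a (κ + (α c - α b)
      - (∫ x in argminSet G α b, (G c x + α c - lowerEnvelope G α x) * s c x ∂μ)
        / ∫ x in argminSet G α b, s c x ∂μ) := by
  have := h.step hs.nonneg (hs.integrable c) hG hC (measurableSet_argminSet hG α b) hM
  rwa [setIntegral_argminSet_sub_mul hG hC (hs.integrable c), sub_div,
    mul_div_cancel_right₀ _ hM.ne', ← add_sub_assoc] at this

theorem canTransfer_of_reflTransGen (hs : IsFeasible μ ω m s) (hG : ∀ i, Measurable (G i))
    (hC : ∀ i, ∀ᵐ x ∂μ, |G i x| ≤ C) (α : ι → ℝ)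
    (h : Relation.ReflTransGen (fun b c => 0 < ∫ x in argminSet G α b, s c x ∂μ) a b) :
    CanTransfer μ G s b a (α b - α a) := by
  induction h with
  | refl => simpa using canTransfer_self a
  | @tail b c _ hbc ih =>
    refine (ih.step_argminSet hs hG hC α hbc).mono ?_
    have := div_nonneg (setIntegral_gap_mul_nonneg (G := G) hs α (argminSet G α b) c) hbc.le
    linarith

/-- Mass of phase `a` where `a` is not optimal could be converted into phase `b`, closing a cycle
of transfers of negative cost. -/
theorem ae_restrict_gap_mul_eq_zero [Nonempty ι] (hs : IsFeasible μ ω m s)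
    (hmin : IsMinOn (cost μ G) {s | IsFeasible μ ω m s} s) (hG : ∀ i, Measurable (G i))
    (hC : ∀ i, ∀ᵐ x ∂μ, |G i x| ≤ C) {α : ι → ℝ} (h : CanTransfer μ G s b a (α b - α a)) :
    ∀ᵐ x ∂μ.restrict (argminSet G α b), (G a x + α a - lowerEnvelope G α x) * s a x = 0 := by
  have hs0 : ∀ᵐ x ∂μ.restrict (argminSet G α b), 0 ≤ s a x := ae_restrict_of_ae (hs.nonneg a)
  rcases (setIntegral_nonneg_of_ae_restrict hs0).lt_or_eq with hM | hM
  · refine ae_restrict_eq_zero_of_setIntegral_nonpos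
      (hs0.mono fun _ hx => mul_nonneg (sub_nonneg.2 (lowerEnvelope_le a)) hx) ?_ ?_
    · exact (integrable_gap_mul hG hC (hs.integrable a) α a).integrableOn
    · have := (h.step_argminSet hs hG hC α hM).nonneg_of_isMinOn hs hmin hG hC
      exact le_of_not_gt fun hη => by linarith [div_pos hη hM]
  · refine (ae_restrict_eq_zero_of_setIntegral_nonpos hs0 (hs.integrable a).integrableOn
      hM.ge).mono fun x hx => by rw [hx, mul_zero]

end Transfer

end Primal

section Main

variable [Nonempty ι] {μ : Measure X} {ω : X → ℝ} {G : ι → X → ℝ} {m : ι → ℝ} {C : ℝ}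

theorem ae_add_eq_lowerEnvelope_of_isMinOn (hω0 : 0 ≤ᵐ[μ] ω) (hω : Integrable ω μ)
    (hG : ∀ i, Measurable (G i)) (hC : ∀ i, ∀ᵐ x ∂μ, |G i x| ≤ C) {α : ι → ℝ}
    (hα : ∀ β, dual μ ω G m β ≤ dual μ ω G m α) {s : ι → X → ℝ} (hs : IsFeasible μ ω m s)
    (hmin : IsMinOn (cost μ G) {s | IsFeasible μ ω m s} s) (a : ι) :
    ∀ᵐ x ∂μ, 0 < s a x → G a x + α a = lowerEnvelope G α x := by
  classical
  set edge : ι → ι → Prop := fun b c => 0 < ∫ x in argminSet G α b, s c x ∂μ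
  set R := Finset.univ.filter (Relation.ReflTransGen edge a)
  set U := ⋃ b ∈ R, argminSet G α b
  have hR : ∀ {b}, b ∈ R ↔ Relation.ReflTransGen edge a b := by simp [R]
  have hU : MeasurableSet U := R.measurableSet_biUnion fun b _ => measurableSet_argminSet hG α b
  have hout : ∀ k ∉ R, ∫ x in U, s k x ∂μ = 0 := fun k hk =>
    integral_eq_zero_of_ae <| (ae_restrict_biUnion_finset_iff _ _ _).2 fun b hb =>
      ae_restrict_eq_zero_of_setIntegral_nonpos (ae_restrict_of_ae (hs.nonneg k))
        (hs.integrable k).integrableOn (not_lt.1 fun hbk => hk (hR.2 ((hR.1 hb).tail hbk)))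
  have hoff : ∀ᵐ x ∂μ.restrict Uᶜ, s a x = 0 := by
    refine ae_restrict_eq_zero_of_setIntegral_nonpos (ae_restrict_of_ae (hs.nonneg a))
      (hs.integrable a).integrableOn ?_
    have := hs.setIntegral_eq_of_sum_le hout
      (sum_le_setIntegral_of_forall_dual_le hω0 hω hG hC hα R) (hR.2 .refl)
    linarith [integral_add_compl hU (hs.integrable a), hs.integral_eq a]
  have hon : ∀ᵐ x ∂μ.restrict U, (G a x + α a - lowerEnvelope G α x) * s a x = 0 :=
    (ae_restrict_biUnion_finset_iff _ _ _).2 fun b hb => ae_restrict_gap_mul_eq_zero hs hmin hG hC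
      (canTransfer_of_reflTransGen hs hG hC α (hR.1 hb))
  rw [ae_restrict_iff' hU] at hon
  rw [ae_restrict_iff' hU.compl] at hoff
  filter_upwards [hon, hoff] with x hon hoff hpos
  by_cases hx : x ∈ U
  · rcases mul_eq_zero.1 (hon hx) with h | h <;> linarith
  · exact absurd (hoff hx) hpos.ne'

theorem exists_forall_ae_add_eq_lowerEnvelope (hω0 : 0 ≤ᵐ[μ] ω) (hω : Integrable ω μ)
    (hm : ∀ i, 0 < m i) (hmass : ∑ i, m i = ∫ x, ω x ∂μ) (hG : ∀ i, Measurable (G i))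
    (hC : ∀ i, ∀ᵐ x ∂μ, |G i x| ≤ C) :
    ∃ α : ι → ℝ, ∀ s, IsFeasible μ ω m s → IsMinOn (cost μ G) {s | IsFeasible μ ω m s} s →
      ∀ i, ∀ᵐ x ∂μ, 0 < s i x → G i x + α i = lowerEnvelope G α x :=
  let ⟨α, hα⟩ := exists_forall_dual_le hω0 hω hm hmass hG hC
  ⟨α, fun _ hs hmin i => ae_add_eq_lowerEnvelope_of_isMinOn hω0 hω hG hC hα hs hmin i⟩

end Main

theorem feasible_iff_isFeasible {d N : ℕ} {Ω : Set (Fin d → ℝ)} {ω : (Fin d → ℝ) → ℝ}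
    {m : Fin (N + 1) → ℝ} {s : Fin (N + 1) → (Fin d → ℝ) → ℝ} :
    feasible Ω ω m s ↔ IsFeasible (volume.restrict Ω) ω m s :=
  ⟨fun ⟨h₁, h₂, h₃, h₄⟩ => ⟨h₁, h₂, h₃, h₄⟩, fun h => ⟨h.1, h.2, h.3, h.4⟩⟩

end Bathtub

open Bathtub

theorem stmt_11_general {d N : ℕ}
    (Ω : Set (Fin d → ℝ))
    (ω : (Fin d → ℝ) → ℝ) (hωint : IntegrableOn ω Ω)
    (hω0 : ∀ᵐ x ∂(volume.restrict Ω), 0 ≤ ω x)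
    (m : Fin (N + 1) → ℝ) (hm : ∀ i, 0 < m i)
    (hmass : ∑ i, m i = ∫ x in Ω, ω x)
    (F : Fin (N + 1) → (Fin d → ℝ) → ℝ)
    (hFmeas : ∀ i, AEStronglyMeasurable (F i) (volume.restrict Ω))
    (hFbdd : ∃ C : ℝ, ∀ i, ∀ᵐ x ∂(volume.restrict Ω), |F i x| ≤ C) :
    ∃ α : Fin (N + 1) → ℝ,
      ∀ sb : Fin (N + 1) → (Fin d → ℝ) → ℝ,
        feasible Ω ω m sb →
        (∀ s, feasible Ω ω m s → primalF Ω F sb ≤ primalF Ω F s) →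
        ∀ i, ∀ᵐ x ∂(volume.restrict Ω),
          0 < sb i x → F i x + α i = ⨅ j, (F j x + α j) := by
  obtain ⟨C, hC⟩ := hFbdd
  set μ := volume.restrict Ω
  obtain ⟨G, hG, hGF⟩ : ∃ G : Fin (N + 1) → (Fin d → ℝ) → ℝ,
      (∀ i, Measurable (G i)) ∧ ∀ i, G i =ᵐ[μ] F i :=
    ⟨fun i => (hFmeas i).mk (F i), fun i => (hFmeas i).stronglyMeasurable_mk.measurable,
      fun i => (hFmeas i).ae_eq_mk.symm⟩
  have hcost : ∀ s, primalF Ω F s = cost μ G s := fun s =>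
    Finset.sum_congr rfl fun i _ => integral_congr_ae <| by
      filter_upwards [hGF i] with x hx
      rw [hx]
  obtain ⟨α, hα⟩ := exists_forall_ae_add_eq_lowerEnvelope hω0 hωint hm hmass hG fun i => by
    filter_upwards [hC i, hGF i] with x hx hGx
    rwa [hGx]
  refine ⟨α, fun sb hsb hmin i => ?_⟩
  have hmin' : IsMinOn (cost μ G) {s | IsFeasible μ ω m s} sb := isMinOn_iff.2 fun s hs => by
    simpa only [← hcost] using hmin s (feasible_iff_isFeasible.2 hs)
  filter_upwards [hα sb (feasible_iff_isFeasible.1 hsb) hmin' i, ae_all_iff.2 hGF]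
    with x hx hGx hpos
  simpa only [lowerEnvelope, hGx] using hx hpos

/-- Multicomponent bathtub principle, Lagrange multiplier part: there are
multipliers α such that every minimizer sb of the primal functional satisfies
F i + α i = min_j (F j + α j) a.e. on the set where sb i > 0. -/
theorem stmt_11 {d N : ℕ}
    (Ω : Set (Fin d → ℝ)) (hΩ : MeasurableSet Ω)
    (ω : (Fin d → ℝ) → ℝ) (hωint : IntegrableOn ω Ω)
    (hω0 : ∀ᵐ x ∂(volume.restrict Ω), 0 ≤ ω x)
    (m : Fin (N + 1) → ℝ) (hm : ∀ i, 0 < m i)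
    (hmass : ∑ i, m i = ∫ x in Ω, ω x)
    (F : Fin (N + 1) → (Fin d → ℝ) → ℝ)
    (hFmeas : ∀ i, AEStronglyMeasurable (F i) (volume.restrict Ω))
    (hFbdd : ∃ C : ℝ, ∀ i, ∀ᵐ x ∂(volume.restrict Ω), |F i x| ≤ C) :
    ∃ α : Fin (N + 1) → ℝ,
      ∀ sb : Fin (N + 1) → (Fin d → ℝ) → ℝ,
        feasible Ω ω m sb →
        (∀ s, feasible Ω ω m s → primalF Ω F sb ≤ primalF Ω F s) →
        ∀ i, ∀ᵐ x ∂(volume.restrict Ω),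
          0 < sb i x → F i x + α i = ⨅ j, (F j x + α j) :=
  stmt_11_general Ω ω hωint hω0 m hm hmass F hFmeas hFbdd
end

section
/- Attainment of the dual problem: the dual functional J is bounded above on ℝ^{N+1} and attains its supremum, i.e. there exists ᾱ ∈ ℝ^{N+1} with J(ᾱ) = sup_{α ∈ ℝ^{N+1}} J(α) < +∞. -/
/-!
The lower envelope `λ_α = min_j (F_j + α_j)` is 1-Lipschitz in `α` for the sup norm, so `J` is
Lipschitz, and `J` is invariant under `α ↦ α + c (1, …, 1)` because `Σ_i m_i = ∫_Ω ω`. Since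
`λ_α ≤ C + min α` whenever `F_j ≤ C`, the same identity gives
`J(α) ≤ C ∫_Ω ω - m_j (α_j - min α)`, so `J(α) < J(0)` unless `α - min α` lies in a fixed box.
After normalising `min α = 0`, it suffices to maximise the continuous `J` over that compact box.
-/

open MeasureTheory

theorem abs_ciInf_sub_ciInf_le {ι : Type*} [Finite ι] [Nonempty ι] {f g : ι → ℝ} {M : ℝ}
    (h : ∀ i, |f i - g i| ≤ M) : |(⨅ i, f i) - ⨅ i, g i| ≤ M := by
  have key : ∀ u v : ι → ℝ, (∀ i, u i - v i ≤ M) → (⨅ i, u i) - M ≤ ⨅ i, v i :=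
    fun u v huv ↦ le_ciInf fun i ↦ by
      linarith [ciInf_le (Set.finite_range u).bddBelow i, huv i]
  rw [abs_sub_le_iff]
  exact ⟨by linarith [key f g fun i ↦ (abs_le.1 (h i)).2],
    by linarith [key g f fun i ↦ by linarith [(abs_le.1 (h i)).1]]⟩

theorem exists_forall_le_of_add_const_invariant {ι : Type*} [Fintype ι] [Nonempty ι]
    {Φ : (ι → ℝ) → ℝ} (hΦ : Continuous Φ) (hshift : ∀ α c, Φ (fun i ↦ α i + c) = Φ α)
    {B : ℝ} {w : ι → ℝ} (hw : ∀ j, 0 < w j)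
    (hbound : ∀ α j, Φ α ≤ B - w j * (α j - ⨅ i, α i)) :
    ∃ αb, ∀ α, Φ α ≤ Φ αb := by
  set R : ι → ℝ := fun j ↦ max 0 ((B - Φ 0) / w j)
  have h0R : (0 : ι → ℝ) ∈ Set.Icc 0 R := ⟨le_rfl, fun j ↦ le_max_left _ _⟩
  obtain ⟨αb, -, hαb⟩ := isCompact_Icc.exists_isMaxOn ⟨0, h0R⟩ hΦ.continuousOn
  refine ⟨αb, fun α ↦ ?_⟩
  by_cases hR : ∀ j, α j - ⨅ i, α i ≤ R j
  · have hmem : (fun j ↦ α j + -⨅ i, α i) ∈ Set.Icc 0 R :=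
      ⟨fun j ↦ by simpa [← sub_eq_add_neg] using ciInf_le (Set.finite_range α).bddBelow j,
        fun j ↦ by simpa [← sub_eq_add_neg] using hR j⟩
    calc Φ α = Φ (fun j ↦ α j + -⨅ i, α i) := (hshift α _).symm
      _ ≤ Φ αb := hαb hmem
  · push Not at hR
    obtain ⟨j, hj⟩ := hR
    have hlt : B - Φ 0 < w j * (α j - ⨅ i, α i) :=
      (div_lt_iff₀' (hw j)).1 ((le_max_right _ _).trans_lt hj)
    have h0 : Φ 0 ≤ Φ αb := hαb h0R
    linarith [hbound α j]

/-- `λ_α` in the paper's notation. -/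
noncomputable def lowerEnvelope {ι X : Type*} (F : ι → X → ℝ) (α : ι → ℝ) (x : X) : ℝ :=
  ⨅ j, F j x + α j

section LowerEnvelope

variable {ι X : Type*} [Fintype ι] [Nonempty ι] {F : ι → X → ℝ} {C : ℝ}

theorem abs_lowerEnvelope_sub_le (α β : ι → ℝ) (x : X) :
    |lowerEnvelope F α x - lowerEnvelope F β x| ≤ dist α β :=
  abs_ciInf_sub_ciInf_le fun j ↦ by
    simpa [← Real.dist_eq] using dist_le_pi_dist α β j

theorem abs_lowerEnvelope_le {x : X} (hC : ∀ j, |F j x| ≤ C) (α : ι → ℝ) :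
    |lowerEnvelope F α x| ≤ C + ‖α‖ := by
  have hterm : ∀ j, |F j x + α j - 0| ≤ C + ‖α‖ := fun j ↦ by
    simpa using (abs_add_le _ _).trans (add_le_add (hC j) (norm_le_pi_norm α j))
  simpa [lowerEnvelope, ciInf_const] using abs_ciInf_sub_ciInf_le hterm

theorem lowerEnvelope_le {x : X} (hC : ∀ j, F j x ≤ C) (α : ι → ℝ) :
    lowerEnvelope F α x ≤ C + ⨅ j, α j := by
  rw [add_ciInf (Set.finite_range α).bddBelow]
  exact ciInf_mono (Set.finite_range _).bddBelow fun j ↦ by gcongr; exact hC j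

theorem lowerEnvelope_add_const (α : ι → ℝ) (c : ℝ) (x : X) :
    lowerEnvelope F (fun i ↦ α i + c) x = lowerEnvelope F α x + c := by
  simp only [lowerEnvelope, ← add_assoc]
  exact (ciInf_add (Set.finite_range _).bddBelow c).symm

variable [MeasurableSpace X] {μ : Measure X} {ω : X → ℝ}

theorem integrable_lowerEnvelope_mul (hF : ∀ j, AEStronglyMeasurable (F j) μ)
    (hC : ∀ᵐ x ∂μ, ∀ j, |F j x| ≤ C) (hω : Integrable ω μ) (α : ι → ℝ) :
    Integrable (fun x ↦ lowerEnvelope F α x * ω x) μ := by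
  refine hω.bdd_mul (c := C + ‖α‖)
    (AEMeasurable.iInf fun j ↦ (hF j).aemeasurable.add_const (α j)).aestronglyMeasurable ?_
  filter_upwards [hC] with x hx
  exact abs_lowerEnvelope_le hx α

theorem lipschitzWith_integral_lowerEnvelope_mul (hF : ∀ j, AEStronglyMeasurable (F j) μ)
    (hC : ∀ᵐ x ∂μ, ∀ j, |F j x| ≤ C) (hω : Integrable ω μ) :
    LipschitzWith (∫ x, |ω x| ∂μ).toNNReal fun α ↦ ∫ x, lowerEnvelope F α x * ω x ∂μ := by
  refine LipschitzWith.of_dist_le_mul fun α β ↦ ?_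
  have hint := integrable_lowerEnvelope_mul hF hC hω
  rw [dist_eq_norm, ← integral_sub (hint α) (hint β),
    Real.coe_toNNReal _ (integral_nonneg fun _ ↦ abs_nonneg _), ← integral_mul_const (dist α β)]
  refine norm_integral_le_of_norm_le (hω.abs.mul_const _) (ae_of_all _ fun x ↦ ?_)
  rw [← sub_mul, norm_mul, Real.norm_eq_abs, Real.norm_eq_abs, mul_comm]
  exact mul_le_mul_of_nonneg_left (abs_lowerEnvelope_sub_le α β x) (abs_nonneg _)

end LowerEnvelope

section DualFunctional

variable {d N : ℕ} {Ω : Set (Fin d → ℝ)} {ω : (Fin d → ℝ) → ℝ} {m : Fin (N + 1) → ℝ}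
  {F : Fin (N + 1) → (Fin d → ℝ) → ℝ} {C : ℝ}

theorem continuous_dualJ (hF : ∀ i, AEStronglyMeasurable (F i) (volume.restrict Ω))
    (hC : ∀ᵐ x ∂(volume.restrict Ω), ∀ i, |F i x| ≤ C) (hω : IntegrableOn ω Ω) :
    Continuous (dualJ Ω ω F m) :=
  (lipschitzWith_integral_lowerEnvelope_mul hF hC hω).continuous.sub <|
    continuous_finsetSum _ fun i _ ↦ (continuous_apply i).mul continuous_const

theorem dualJ_add_const (hF : ∀ i, AEStronglyMeasurable (F i) (volume.restrict Ω))
    (hC : ∀ᵐ x ∂(volume.restrict Ω), ∀ i, |F i x| ≤ C) (hω : IntegrableOn ω Ω)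
    (hmass : ∑ i, m i = ∫ x in Ω, ω x) (α : Fin (N + 1) → ℝ) (c : ℝ) :
    dualJ Ω ω F m (fun i ↦ α i + c) = dualJ Ω ω F m α := by
  change (∫ x in Ω, lowerEnvelope F _ x * ω x) - _ = (∫ x in Ω, lowerEnvelope F α x * ω x) - _
  simp only [lowerEnvelope_add_const, add_mul, Finset.sum_add_distrib]
  rw [integral_add (integrable_lowerEnvelope_mul hF hC hω α) (hω.const_mul c),
    integral_const_mul, ← hmass, Finset.mul_sum]
  ring

theorem dualJ_le (hF : ∀ i, AEStronglyMeasurable (F i) (volume.restrict Ω))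
    (hC : ∀ᵐ x ∂(volume.restrict Ω), ∀ i, |F i x| ≤ C) (hω : IntegrableOn ω Ω)
    (hω0 : ∀ᵐ x ∂(volume.restrict Ω), 0 ≤ ω x) (hm : ∀ i, 0 ≤ m i)
    (hmass : ∑ i, m i = ∫ x in Ω, ω x) (α : Fin (N + 1) → ℝ) (j : Fin (N + 1)) :
    dualJ Ω ω F m α ≤ C * (∫ x in Ω, ω x) - m j * (α j - ⨅ i, α i) := by
  set a := ⨅ i, α i
  have henvelope : ∫ x in Ω, lowerEnvelope F α x * ω x ≤ (C + a) * ∫ x in Ω, ω x := by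
    rw [← integral_const_mul]
    refine integral_mono_ae (integrable_lowerEnvelope_mul hF hC hω α) (hω.const_mul _) ?_
    filter_upwards [hC, hω0] with x hx hx0
    exact mul_le_mul_of_nonneg_right (lowerEnvelope_le (fun i ↦ (abs_le.1 (hx i)).2) α) hx0
  have hlinear : m j * (α j - a) + a * ∫ x in Ω, ω x ≤ ∑ i, α i * m i := by
    have hsplit : ∑ i, α i * m i = ∑ i, (α i - a) * m i + a * ∑ i, m i := by
      rw [Finset.mul_sum, ← Finset.sum_add_distrib]
      exact Finset.sum_congr rfl fun i _ ↦ by ring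
    rw [hsplit, ← hmass, mul_comm (m j)]
    gcongr
    exact Finset.single_le_sum (f := fun i ↦ (α i - a) * m i)
      (fun i _ ↦ mul_nonneg (sub_nonneg.2 (ciInf_le (Set.finite_range α).bddBelow i)) (hm i))
      (Finset.mem_univ j)
  change (∫ x in Ω, lowerEnvelope F α x * ω x) - _ ≤ _
  linarith

end DualFunctional

theorem stmt_13_general {d N : ℕ}
    (Ω : Set (Fin d → ℝ))
    (ω : (Fin d → ℝ) → ℝ) (hωint : IntegrableOn ω Ω)
    (hω0 : ∀ᵐ x ∂(volume.restrict Ω), 0 ≤ ω x)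
    (m : Fin (N + 1) → ℝ) (hm : ∀ i, 0 < m i)
    (hmass : ∑ i, m i = ∫ x in Ω, ω x)
    (F : Fin (N + 1) → (Fin d → ℝ) → ℝ)
    (hFmeas : ∀ i, AEStronglyMeasurable (F i) (volume.restrict Ω))
    (hFbdd : ∃ C : ℝ, ∀ i, ∀ᵐ x ∂(volume.restrict Ω), |F i x| ≤ C) :
    ∃ αb : Fin (N + 1) → ℝ, ∀ α : Fin (N + 1) → ℝ,
      dualJ Ω ω F m α ≤ dualJ Ω ω F m αb := by
  obtain ⟨C, hC⟩ := hFbdd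
  have hCae : ∀ᵐ x ∂(volume.restrict Ω), ∀ i, |F i x| ≤ C := ae_all_iff.2 hC
  exact exists_forall_le_of_add_const_invariant (continuous_dualJ hFmeas hCae hωint)
    (dualJ_add_const hFmeas hCae hωint hmass) hm
    (dualJ_le hFmeas hCae hωint hω0 (fun i ↦ (hm i).le) hmass)

/-- Attainment of the dual problem: the dual functional J is bounded above and
attains its supremum. -/
theorem stmt_13 {d N : ℕ}
    (Ω : Set (Fin d → ℝ)) (hΩ : MeasurableSet Ω)
    (ω : (Fin d → ℝ) → ℝ) (hωint : IntegrableOn ω Ω)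
    (hω0 : ∀ᵐ x ∂(volume.restrict Ω), 0 ≤ ω x)
    (m : Fin (N + 1) → ℝ) (hm : ∀ i, 0 < m i)
    (hmass : ∑ i, m i = ∫ x in Ω, ω x)
    (F : Fin (N + 1) → (Fin d → ℝ) → ℝ)
    (hFmeas : ∀ i, AEStronglyMeasurable (F i) (volume.restrict Ω))
    (hFbdd : ∃ C : ℝ, ∀ i, ∀ᵐ x ∂(volume.restrict Ω), |F i x| ≤ C) :
    ∃ αb : Fin (N + 1) → ℝ, ∀ α : Fin (N + 1) → ℝ,
      dualJ Ω ω F m α ≤ dualJ Ω ω F m αb :=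
  stmt_13_general Ω ω hωint hω0 m hm hmass F hFmeas hFbdd
end

section
/- Complementary slackness from a primal-dual optimal pair: if s̄ is any minimizer of 𝓕 over 𝒳 ∩ 𝒜 and ᾱ is any maximizer of J over ℝ^{N+1}, then for each i ∈ {0,…,N}, F_i(x) + ᾱ_i = λ_ᾱ(x) for a.e. x in the set {x ∈ Ω : s̄_i(x) > 0}. -/
open MeasureTheory
open scoped ENNReal

/-- Auxiliary: a finite `inf'` of a.e.-strongly-measurable real functions is
a.e. strongly measurable. -/
lemma aesm_inf'_aux {α : Type*} {mα : MeasurableSpace α} {μ : Measure α}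
    {ι : Type*} {t : Finset ι} (ht : t.Nonempty) (g : ι → α → ℝ)
    (hg : ∀ j, AEStronglyMeasurable (g j) μ) :
    AEStronglyMeasurable (fun x => t.inf' ht fun j => g j x) μ := by
  induction ht using Finset.Nonempty.cons_induction with
  | singleton j =>
      simp only [Finset.inf'_singleton]
      exact hg j
  | cons j t hj ht ih =>
      simp only [Finset.inf'_cons (H := ht)]
      exact (hg j).inf ih

/-- Complementary slackness from a primal-dual optimal pair: if sb minimizes the
primal functional, αb maximizes the dual functional, and min 𝓕 = max J, then
F i + αb i = min_j (F j + αb j) a.e. on the set where sb i > 0. -/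
theorem stmt_15 {d N : ℕ}
    (Ω : Set (Fin d → ℝ)) (hΩ : MeasurableSet Ω)
    (ω : (Fin d → ℝ) → ℝ) (hωint : IntegrableOn ω Ω)
    (hω0 : ∀ᵐ x ∂(volume.restrict Ω), 0 ≤ ω x)
    (m : Fin (N + 1) → ℝ) (hm : ∀ i, 0 < m i)
    (hmass : ∑ i, m i = ∫ x in Ω, ω x)
    (F : Fin (N + 1) → (Fin d → ℝ) → ℝ)
    (hFmeas : ∀ i, AEStronglyMeasurable (F i) (volume.restrict Ω))
    (hFbdd : ∃ C : ℝ, ∀ i, ∀ᵐ x ∂(volume.restrict Ω), |F i x| ≤ C)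
    (sb : Fin (N + 1) → (Fin d → ℝ) → ℝ) (hsb : feasible Ω ω m sb)
    (hsbmin : ∀ s, feasible Ω ω m s → primalF Ω F sb ≤ primalF Ω F s)
    (αb : Fin (N + 1) → ℝ)
    (hαbmax : ∀ α, dualJ Ω ω F m α ≤ dualJ Ω ω F m αb)
    (hdual : primalF Ω F sb = dualJ Ω ω F m αb) :
    ∀ i, ∀ᵐ x ∂(volume.restrict Ω),
      0 < sb i x → F i x + αb i = ⨅ j, (F j x + αb j) := by
  classical
  obtain ⟨C, hC⟩ := hFbdd
  obtain ⟨hsint, hs0, hsm, hssum⟩ := hsb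
  simp only [primalF, dualJ] at hdual
  set μ := volume.restrict Ω with hμ
  set lam : (Fin d → ℝ) → ℝ := fun x => ⨅ j, (F j x + αb j) with hlamdef
  -- the infimum is below each term
  have hlamle : ∀ (i : Fin (N + 1)) x, lam x ≤ F i x + αb i := fun i x =>
    ciInf_le (Set.Finite.bddBelow (Set.finite_range _)) i
  have hlam_eq : ∀ x,
      lam x = Finset.univ.inf' Finset.univ_nonempty (fun j => F j x + αb j) :=
    fun x => (Finset.inf'_univ_eq_ciInf _).symm
  -- measurability of lam
  have hlam_meas : AEStronglyMeasurable lam μ := by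
    have h := aesm_inf'_aux (μ := μ) (t := Finset.univ) Finset.univ_nonempty
      (fun j x => F j x + αb j)
      (fun j => (hFmeas j).add aestronglyMeasurable_const)
    exact h.congr (Filter.Eventually.of_forall fun x => (hlam_eq x).symm)
  -- bound for lam
  set A : ℝ := ∑ j, |αb j| with hA
  have hAle : ∀ j : Fin (N + 1), |αb j| ≤ A := fun j => by
    rw [hA]
    exact Finset.single_le_sum (f := fun k => |αb k|) (fun k _ => abs_nonneg _)
      (Finset.mem_univ j)
  have hCae : ∀ᵐ x ∂μ, ∀ j, |F j x| ≤ C := ae_all_iff.2 hC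
  have hlam_bdd : ∀ᵐ x ∂μ, ‖lam x‖ ≤ C + A := by
    filter_upwards [hCae] with x hx
    rw [Real.norm_eq_abs, abs_le]
    constructor
    · rw [hlam_eq x]
      apply Finset.le_inf'
      intro j _
      have h1 := abs_le.1 (hx j)
      have h2 := abs_le.1 (hAle j)
      linarith
    · have h1 := abs_le.1 (hx 0)
      have h2 := abs_le.1 (hAle 0)
      have := hlamle 0 x
      linarith
  -- integrability facts
  have hFs : ∀ i, Integrable (fun x => F i x * sb i x) μ := fun i =>
    (hsint i).bdd_mul (hFmeas i)
      ((hC i).mono fun x hx => by simpa [Real.norm_eq_abs] using hx)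
  have hlams : ∀ i, Integrable (fun x => lam x * sb i x) μ := fun i =>
    (hsint i).bdd_mul hlam_meas hlam_bdd
  have hαs : ∀ i, Integrable (fun x => αb i * sb i x) μ := fun i =>
    (hsint i).const_mul (αb i)
  -- ∫ lam * ω = ∑ i ∫ lam * sb i
  have h1 : ∫ x, lam x * ω x ∂μ = ∑ i, ∫ x, lam x * sb i x ∂μ := by
    have he : ∫ x, lam x * ω x ∂μ = ∫ x, (∑ i, lam x * sb i x) ∂μ := by
      apply integral_congr_ae
      filter_upwards [hssum] with x hx
      rw [← Finset.mul_sum, hx]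
    rw [he, integral_finset_sum _ fun i _ => hlams i]
  -- αb i * m i = ∫ αb i * sb i
  have h2 : ∀ i, αb i * m i = ∫ x, αb i * sb i x ∂μ := fun i => by
    rw [integral_const_mul, hsm i]
  -- the slack functions
  set g : Fin (N + 1) → (Fin d → ℝ) → ℝ :=
    fun i x => (F i x + αb i - lam x) * sb i x with hg
  have hgint : ∀ i, Integrable (g i) μ := fun i => by
    have h := ((hFs i).add (hαs i)).sub (hlams i)
    exact h.congr (Filter.Eventually.of_forall fun x => by simp [hg]; ring)
  have hgval : ∀ i, ∫ x, g i x ∂μ =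
      (∫ x, F i x * sb i x ∂μ) + (∫ x, αb i * sb i x ∂μ)
        - ∫ x, lam x * sb i x ∂μ := fun i => by
    have he : (fun x => g i x)
        =ᵐ[μ] fun x => F i x * sb i x + αb i * sb i x - lam x * sb i x :=
      Filter.Eventually.of_forall fun x => by simp [hg]; ring
    have hadd : Integrable (fun x => F i x * sb i x + αb i * sb i x) μ :=
      (hFs i).add (hαs i)
    rw [integral_congr_ae he, integral_sub hadd (hlams i), integral_add (hFs i) (hαs i)]
  have hgnonneg : ∀ i, ∀ᵐ x ∂μ, 0 ≤ g i x := fun i => by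
    filter_upwards [hs0 i] with x hx
    have := hlamle i x
    have : 0 ≤ F i x + αb i - lam x := by linarith
    exact mul_nonneg this hx
  -- sum of integrals is zero
  have hsum0 : ∑ i, ∫ x, g i x ∂μ = 0 := by
    have hrw : ∑ i, ∫ x, g i x ∂μ =
        (∑ i, ∫ x, F i x * sb i x ∂μ) + (∑ i, ∫ x, αb i * sb i x ∂μ)
          - ∑ i, ∫ x, lam x * sb i x ∂μ := by
      rw [← Finset.sum_add_distrib, ← Finset.sum_sub_distrib]
      exact Finset.sum_congr rfl fun i _ => hgval i
    rw [hrw, ← h1]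
    have h2' : ∑ i, αb i * m i = ∑ i, ∫ x, αb i * sb i x ∂μ :=
      Finset.sum_congr rfl fun i _ => h2 i
    rw [← h2']
    linarith [hdual]
  -- each integral is zero
  have hizero : ∀ i, ∫ x, g i x ∂μ = 0 := by
    have := (Finset.sum_eq_zero_iff_of_nonneg
      (fun i _ => integral_nonneg_of_ae (hgnonneg i))).1 hsum0
    exact fun i => this i (Finset.mem_univ i)
  -- conclude
  intro i
  have hzero : g i =ᵐ[μ] 0 :=
    (integral_eq_zero_iff_of_nonneg_ae (hgnonneg i) (hgint i)).1 (hizero i)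
  filter_upwards [hzero] with x hx hpos
  have hx' : (F i x + αb i - lam x) * sb i x = 0 := hx
  rcases mul_eq_zero.1 hx' with h | h
  · have : F i x + αb i = lam x := by linarith
    simpa [hlamdef] using this
  · exact absurd h (ne_of_gt hpos)
end
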